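/- arXiv:2303.17576 — 6 statements merged into one kernel-verified Lean document; each statement's English description precedes it below -/
import Mathlib

section
/- For positive integers j and k and an index set I, the set A_{j+k}[I] of tagged partition sequences of length j+k is in bijection with the disjoint union, over a ∈ A_j[I], of the sets A_k[a] of partition sequences of length k tagged by the blocks of a. -/
/-- Numerical value of an entry of a tagged sequence: tags count as `0`. -/
def natVal {ι : Type*} : ι ⊕ ℕ → ℕ := Sum.elim (fun _ => 0) id

/-- Tagged partition sequences `A_n[I]` with tags in the index type `ι`:
entries are either tags from `ι` or positive integers, and every positive
entry is at most one more than the running maximum of previous entries. -/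
def TagSeqI (ι : Type) (n : ℕ) : Set (Fin n → ι ⊕ ℕ) :=
  {a | (∀ k, a k ≠ Sum.inr 0) ∧
    ∀ k : Fin n,
      natVal (a k) ≤ 1 + (Finset.univ.filter (fun i => i < k)).sup (fun i => natVal (a i))}

/-- `m[a]`, the number of blocks of the tagged partition sequence `a`. -/
def mvalI {ι : Type} {n : ℕ} (a : Fin n → ι ⊕ ℕ) : ℕ :=
  Finset.univ.sup fun i => natVal (a i)

namespace Stmt3

variable {ι : Type}

def encE (m : ℕ) : ι ⊕ ℕ → (ι ⊕ Fin m) ⊕ ℕ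
  | .inl t => .inl (.inl t)
  | .inr v => if h : 0 < v ∧ v ≤ m then .inl (.inr ⟨v - 1, by omega⟩) else .inr (v - m)

def decE (m : ℕ) : (ι ⊕ Fin m) ⊕ ℕ → ι ⊕ ℕ
  | .inl (.inl t) => .inl t
  | .inl (.inr f) => .inr (f + 1)
  | .inr v => .inr (v + m)

variable {j k : ℕ}

def firstPart (c : Fin (j + k) → ι ⊕ ℕ) : Fin j → ι ⊕ ℕ :=
  fun i => c (Fin.castAdd k i)

def secondPart (c : Fin (j + k) → ι ⊕ ℕ) :
    Fin k → (ι ⊕ Fin (mvalI (firstPart c))) ⊕ ℕ :=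
  fun i => encE _ (c (Fin.natAdd j i))

def glue (a : Fin j → ι ⊕ ℕ) (b : Fin k → (ι ⊕ Fin (mvalI a)) ⊕ ℕ) :
    Fin (j + k) → ι ⊕ ℕ :=
  fun p => if h : (p : ℕ) < j then a ⟨(p : ℕ), h⟩
    else decE (mvalI a) (b ⟨(p : ℕ) - j, by omega⟩)

lemma subsup (s : Finset (Fin k)) (g : Fin k → ℕ) (m : ℕ) :
    s.sup (fun x => g x - m) = s.sup g - m := by
  rw [Finset.comp_sup_eq_sup_comp (fun x => x - m)
    (fun b c => by show (max b c) - m = max (b - m) (c - m); omega)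
    (by show 0 - m = 0; omega)]
  rfl



lemma memf {n : ℕ} {p q : Fin n} (h : (p : ℕ) < (q : ℕ)) :
    p ∈ Finset.univ.filter (fun i : Fin n => i < q) :=
  Finset.mem_filter.mpr ⟨Finset.mem_univ _, Fin.lt_def.mpr h⟩

lemma memf' {n : ℕ} {p q : Fin n} (h : p ∈ Finset.univ.filter (fun i : Fin n => i < q)) :
    (p : ℕ) < (q : ℕ) := Fin.lt_def.mp (Finset.mem_filter.mp h).2

lemma supA {j k : ℕ} (f : Fin (j + k) → ℕ) (i : Fin j) :
    (Finset.univ.filter (fun p : Fin (j + k) => p < Fin.castAdd k i)).sup f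
      = (Finset.univ.filter (fun p : Fin j => p < i)).sup (fun p => f (Fin.castAdd k p)) := by
  apply le_antisymm
  · apply Finset.sup_le
    intro p hp
    have hp' : (p : ℕ) < (i : ℕ) := memf' hp
    have hpe : p = Fin.castAdd k ⟨(p : ℕ), by omega⟩ := Fin.ext rfl
    rw [hpe]
    exact Finset.le_sup (f := fun p => f (Fin.castAdd k p)) (memf (q := i) hp')
  · apply Finset.sup_le
    intro p hp
    have hp' : (p : ℕ) < (i : ℕ) := memf' hp
    exact Finset.le_sup (f := f) (memf (p := Fin.castAdd k p) (q := Fin.castAdd k i) hp')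

lemma supB {j k : ℕ} (f : Fin (j + k) → ℕ) (i : Fin k) :
    (Finset.univ.filter (fun p : Fin (j + k) => p < Fin.natAdd j i)).sup f
      = max (Finset.univ.sup (fun p : Fin j => f (Fin.castAdd k p)))
          ((Finset.univ.filter (fun p : Fin k => p < i)).sup (fun p => f (Fin.natAdd j p))) := by
  apply le_antisymm
  · apply Finset.sup_le
    intro p hp
    have hp' : (p : ℕ) < j + (i : ℕ) := memf' hp
    by_cases hpj : (p : ℕ) < j
    · have hpe : p = Fin.castAdd k ⟨(p : ℕ), hpj⟩ := Fin.ext rfl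
      rw [hpe]
      exact le_trans (Finset.le_sup (f := fun p : Fin j => f (Fin.castAdd k p))
        (Finset.mem_univ (⟨(p : ℕ), hpj⟩ : Fin j))) (le_max_left _ _)
    · have hpe : p = Fin.natAdd j ⟨(p : ℕ) - j, by omega⟩ := Fin.ext (by simp; omega)
      rw [hpe]
      exact le_trans (Finset.le_sup (f := fun p : Fin k => f (Fin.natAdd j p))
        (memf (p := (⟨(p : ℕ) - j, by omega⟩ : Fin k)) (q := i) (by simp; omega)))
        (le_max_right _ _)
  · apply max_le
    · apply Finset.sup_le
      intro p _
      exact Finset.le_sup (f := f)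
        (memf (p := Fin.castAdd k p) (q := Fin.natAdd j i) (by simp; omega))
    · apply Finset.sup_le
      intro p hp
      have hp' : (p : ℕ) < (i : ℕ) := memf' hp
      exact Finset.le_sup (f := f)
        (memf (p := Fin.natAdd j p) (q := Fin.natAdd j i) (by simp; omega))


-- first part is a tagged sequence
lemma firstPart_mem (c : Fin (j + k) → ι ⊕ ℕ) (hc : c ∈ TagSeqI ι (j + k)) :
    firstPart c ∈ TagSeqI ι j := by
  refine ⟨fun q => hc.1 _, fun q => ?_⟩
  have := hc.2 (Fin.castAdd k q)
  rwa [supA (fun p => natVal (c p)) q] at this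

lemma mvalI_firstPart (c : Fin (j + k) → ι ⊕ ℕ) :
    mvalI (firstPart c) = Finset.univ.sup (fun p : Fin j => natVal (c (Fin.castAdd k p))) := rfl

end Stmt3

namespace Stmt3
variable {ι : Type} {j k : ℕ}

lemma natVal_encE (m : ℕ) (y : ι ⊕ ℕ) (hy : y ≠ .inr 0) :
    natVal (encE m y) = natVal y - m := by
  cases y with
  | inl t => simp [encE, natVal]
  | inr v =>
    have hv : v ≠ 0 := fun h => hy (by rw [h])
    by_cases h : 0 < v ∧ v ≤ m
    · rw [encE, dif_pos h]; simp [natVal]; omega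
    · rw [encE, dif_neg h]; simp [natVal]

lemma encE_ne (m : ℕ) (y : ι ⊕ ℕ) (hy : y ≠ .inr 0) : encE m y ≠ .inr 0 := by
  cases y with
  | inl t => simp [encE]
  | inr v =>
    have hv : v ≠ 0 := fun h => hy (by rw [h])
    by_cases h : 0 < v ∧ v ≤ m
    · rw [encE, dif_pos h]; simp
    · rw [encE, dif_neg h]; simp; omega

lemma secondPart_mem (c : Fin (j + k) → ι ⊕ ℕ) (hc : c ∈ TagSeqI ι (j + k)) :
    secondPart c ∈ TagSeqI (ι ⊕ Fin (mvalI (firstPart c))) k := by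
  set m := mvalI (firstPart c) with hm
  refine ⟨fun q => encE_ne _ _ (hc.1 _), fun q => ?_⟩
  have h1 : natVal (secondPart c q) = natVal (c (Fin.natAdd j q)) - m :=
    natVal_encE _ _ (hc.1 _)
  have h2 : (Finset.univ.filter (fun i : Fin k => i < q)).sup
        (fun i => natVal (secondPart c i))
      = (Finset.univ.filter (fun i : Fin k => i < q)).sup
        (fun i => natVal (c (Fin.natAdd j i))) - m := by
    rw [← subsup]
    exact Finset.sup_congr rfl (fun i _ => natVal_encE _ _ (hc.1 _))
  have h3 := hc.2 (Fin.natAdd j q)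
  rw [supB (fun p => natVal (c p)) q, ← mvalI_firstPart, ← hm] at h3
  rw [h1, h2]
  rw [max_def] at h3
  split at h3 <;> omega

end Stmt3

namespace Stmt3
variable {ι : Type} {j k : ℕ}

lemma decE_ne (m : ℕ) (x : (ι ⊕ Fin m) ⊕ ℕ) (hx : x ≠ .inr 0) : decE m x ≠ .inr 0 := by
  rcases x with (t | f) | v
  · simp [decE]
  · simp [decE]
  · have hv : v ≠ 0 := fun h => hx (by rw [h])
    simp [decE]; omega

lemma glue_castAdd (a : Fin j → ι ⊕ ℕ) (b : Fin k → (ι ⊕ Fin (mvalI a)) ⊕ ℕ) (q : Fin j) :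
    glue a b (Fin.castAdd k q) = a q := by
  have h : ((Fin.castAdd k q : Fin (j + k)) : ℕ) < j := q.isLt
  simp only [glue, dif_pos h]
  exact congrArg a (Fin.ext rfl)

lemma glue_natAdd (a : Fin j → ι ⊕ ℕ) (b : Fin k → (ι ⊕ Fin (mvalI a)) ⊕ ℕ) (q : Fin k) :
    glue a b (Fin.natAdd j q) = decE (mvalI a) (b q) := by
  have h : ¬ ((Fin.natAdd j q : Fin (j + k)) : ℕ) < j := by simp
  simp only [glue, dif_neg h]
  refine congrArg (fun x : Fin k => decE (mvalI a) (b x)) (Fin.ext ?_)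
  show ((Fin.natAdd j q : Fin (j + k)) : ℕ) - j = (q : ℕ)
  simp

lemma sup_first (a : Fin j → ι ⊕ ℕ) (b : Fin k → (ι ⊕ Fin (mvalI a)) ⊕ ℕ) :
    Finset.univ.sup (fun p : Fin j => natVal (glue a b (Fin.castAdd k p))) = mvalI a :=
  Finset.sup_congr rfl (fun p _ => by rw [glue_castAdd])

lemma glue_mem (a : Fin j → ι ⊕ ℕ) (ha : a ∈ TagSeqI ι j)
    (b : Fin k → (ι ⊕ Fin (mvalI a)) ⊕ ℕ) (hb : b ∈ TagSeqI (ι ⊕ Fin (mvalI a)) k) :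
    glue a b ∈ TagSeqI ι (j + k) := by
  constructor
  · intro p
    by_cases h : (p : ℕ) < j
    · simp only [glue, dif_pos h]; exact ha.1 _
    · simp only [glue, dif_neg h]; exact decE_ne _ _ (hb.1 _)
  · intro p
    by_cases hpj : (p : ℕ) < j
    · have hpe : p = Fin.castAdd k ⟨(p : ℕ), hpj⟩ := Fin.ext rfl
      rw [hpe, glue_castAdd, supA (fun p => natVal (glue a b p)) ⟨(p : ℕ), hpj⟩,
        Finset.sup_congr rfl (fun i _ => by rw [glue_castAdd])]
      exact ha.2 _
    · have hq : (p : ℕ) - j < k := by omega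
      have hpe : p = Fin.natAdd j ⟨(p : ℕ) - j, hq⟩ := by
        refine Fin.ext ?_
        simp only [Fin.coe_natAdd, Fin.val_mk]
        omega
      set q : Fin k := ⟨(p : ℕ) - j, hq⟩
      rw [hpe, glue_natAdd, supB (fun p => natVal (glue a b p)) q, sup_first,
        Finset.sup_congr rfl (fun i _ => by rw [glue_natAdd])]
      set T := (Finset.univ.filter (fun i : Fin k => i < q)).sup
        (fun i => natVal (decE (mvalI a) (b i))) with hT
      rcases hbq : b q with (t | f) | v
      · simp [decE, natVal]
      · have h1 : natVal (decE (mvalI a) (.inl (.inr f)) : ι ⊕ ℕ) = (f : ℕ) + 1 := by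
          simp [decE, natVal]
        rw [h1]
        have := f.isLt
        have := le_max_left (mvalI a) T
        omega
      · have hv : v ≠ 0 := fun h => hb.1 q (by rw [hbq, h])
        have hnv : natVal (decE (mvalI a) (.inr v) : ι ⊕ ℕ) = v + mvalI a := by
          simp [decE, natVal]
        rw [hnv]
        have hbv : v ≤ 1 + (Finset.univ.filter (fun i : Fin k => i < q)).sup
            (fun i => natVal (b i)) := by
          have := hb.2 q
          rwa [hbq] at this
        set Tb := (Finset.univ.filter (fun i : Fin k => i < q)).sup
          (fun i => natVal (b i)) with hTb
        have key : Tb = 0 ∨ mvalI a + Tb ≤ T := by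
          by_cases h0 : Tb = 0
          · exact Or.inl h0
          · refine Or.inr ?_
            have hne : (Finset.univ.filter (fun i : Fin k => i < q)).Nonempty := by
              by_contra h
              rw [Finset.not_nonempty_iff_eq_empty] at h
              rw [hTb, h] at h0
              exact h0 rfl
            obtain ⟨q', hq', hq'e⟩ := Finset.exists_mem_eq_sup _ hne
              (fun i : Fin k => natVal (b i))
            rcases hbq' : b q' with (t' | f') | w
            · rw [hbq'] at hq'e; exact absurd (hq'e.trans rfl) h0
            · rw [hbq'] at hq'e; exact absurd (hq'e.trans rfl) h0
            · rw [hbq'] at hq'e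
              have hw : w = Tb := (hq'e.trans rfl).symm
              have hle : natVal (decE (mvalI a) (b q') : ι ⊕ ℕ) ≤ T :=
                Finset.le_sup (f := fun i => natVal (decE (mvalI a) (b i))) hq'
              rw [hbq'] at hle
              have h2 : natVal (decE (mvalI a) (.inr w) : ι ⊕ ℕ) = w + mvalI a := by
                simp [decE, natVal]
              rw [h2] at hle
              omega
        have hmax : (mvalI a ⊔ T) = max (mvalI a) T := rfl
        rw [hmax, Nat.max_def]
        rcases key with h0 | hle <;> split <;> omega
end Stmt3

namespace Stmt3
variable {ι : Type} {j k : ℕ}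

lemma decE_encE (m : ℕ) (y : ι ⊕ ℕ) (hy : y ≠ .inr 0) : decE m (encE m y) = y := by
  cases y with
  | inl t => simp [encE, decE]
  | inr v =>
    have hv : v ≠ 0 := fun h => hy (by rw [h])
    by_cases h : 0 < v ∧ v ≤ m
    · rw [encE, dif_pos h]; simp [decE]; omega
    · rw [encE, dif_neg h]; simp [decE]; omega

lemma encE_decE (m m' : ℕ) (h : m = m') (x : (ι ⊕ Fin m) ⊕ ℕ) (hx : x ≠ .inr 0) :
    encE m' (decE m x) = Sum.map (Sum.map id (Fin.cast h)) id x := by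
  subst h
  rcases x with (t | f) | v
  · simp [encE, decE]
  · rw [decE, encE, dif_pos ⟨Nat.succ_pos _, f.isLt⟩]
    simp [Fin.cast]
  · have hv : v ≠ 0 := fun h => hx (by rw [h])
    rw [decE, encE, dif_neg (by omega)]
    simp

lemma glue_round (c : Fin (j + k) → ι ⊕ ℕ) (hc : ∀ p, c p ≠ .inr 0) :
    glue (firstPart c) (secondPart c) = c := by
  funext p
  by_cases h : (p : ℕ) < j
  · simp only [glue, dif_pos h]
    exact congrArg c (Fin.ext rfl)
  · simp only [glue, dif_neg h]
    rw [show (⟨(p : ℕ) - j, by omega⟩ : Fin k) = ⟨(p : ℕ) - j, by omega⟩ from rfl]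
    unfold secondPart
    rw [decE_encE _ _ (hc _)]
    refine congrArg c (Fin.ext ?_)
    show j + ((p : ℕ) - j) = (p : ℕ)
    omega

lemma firstPart_glue (a : Fin j → ι ⊕ ℕ) (b : Fin k → (ι ⊕ Fin (mvalI a)) ⊕ ℕ) :
    firstPart (glue a b) = a :=
  funext fun q => glue_castAdd a b q

lemma heq_map {m₁ m₂ : ℕ} (h : m₂ = m₁) (f : Fin k → (ι ⊕ Fin m₂) ⊕ ℕ) :
    HEq (fun i => (Sum.map (Sum.map id (Fin.cast h)) id (f i) : (ι ⊕ Fin m₁) ⊕ ℕ)) f := by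
  subst h
  refine heq_of_eq (funext fun i => ?_)
  rcases f i with (t | f') | v
  · rfl
  · show Sum.inl (Sum.inr (Fin.cast rfl f')) = Sum.inl (Sum.inr f')
    rfl
  · rfl

lemma sigma_eq {a₁ a₂ : TagSeqI ι j} (h : a₁ = a₂)
    {b₁ : TagSeqI (ι ⊕ Fin (mvalI a₁.val)) k} {b₂ : TagSeqI (ι ⊕ Fin (mvalI a₂.val)) k}
    (hb : HEq b₁.val b₂.val) :
    (⟨a₁, b₁⟩ : (a : TagSeqI ι j) × (TagSeqI (ι ⊕ Fin (mvalI a.val)) k)) = ⟨a₂, b₂⟩ := by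
  subst h
  exact congrArg _ (Subtype.ext (eq_of_heq hb))

end Stmt3

open Stmt3 in
/-- `A_{j+k}[I]` is in bijection with the disjoint union over `a ∈ A_j[I]` of
the sets `A_k[a]` of sequences of length `k` tagged by `I` together with the
blocks of `a` (the latter being indexed by `Fin m[a]`). -/
theorem stmt3 (ι : Type) (j k : ℕ) (hj : 0 < j) (hk : 0 < k) :
    Nonempty ((TagSeqI ι (j + k)) ≃
      (a : TagSeqI ι j) × (TagSeqI (ι ⊕ Fin (mvalI a.val)) k)) := by
  refine ⟨{
    toFun := fun c => ⟨⟨firstPart c.val, firstPart_mem c.val c.2⟩,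
      ⟨secondPart c.val, secondPart_mem c.val c.2⟩⟩
    invFun := fun x => ⟨glue x.1.val x.2.val, glue_mem x.1.val x.1.2 x.2.val x.2.2⟩
    left_inv := fun c => Subtype.ext (glue_round c.val c.2.1)
    right_inv := ?_ }⟩
  rintro ⟨⟨a, ha⟩, ⟨b, hb⟩⟩
  have hm : mvalI (firstPart (glue a b)) = mvalI a := congrArg mvalI (firstPart_glue a b)
  refine sigma_eq (Subtype.ext (firstPart_glue a b)) ?_
  have h1 : secondPart (glue a b)
      = fun q => Sum.map (Sum.map id (Fin.cast hm.symm)) id (b q) := by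
    funext q
    show encE _ (glue a b (Fin.natAdd j q)) = _
    rw [glue_natAdd]
    exact encE_decE (mvalI a) _ hm.symm (b q) (hb.1 q)
  show HEq (secondPart (glue a b)) b
  rw [h1]
  exact heq_map hm.symm b
end

section
/- The set of coupled partitions P ∪̃ Q is in bijection with the set of quotient sets (P ⊔ Q)/∼_{f,g} ranging over all pairs of injective total functions f : R → P, g : R → Q from arbitrary sets R, where (p,P) ∼_{f,g} (q,Q) iff f^{-1}(p) = g^{-1}(q); i.e., couplings are exactly pushouts along pairs of injections. -/
/-- `P` is a partition of the subset `S`. -/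
def IsPartitionOn {α : Type*} (S : Set α) (P : Set (Set α)) : Prop :=
  ∅ ∉ P ∧ (∀ p ∈ P, p ⊆ S) ∧ ∀ x ∈ S, ∃! p, p ∈ P ∧ x ∈ p

/-- The trace of a collection of sets `G` on a set `S`:
`{g ∩ S : g ∈ G} \ {∅}`. -/
def trace {α : Type*} (S : Set α) (G : Set (Set α)) : Set (Set α) :=
  {s | s.Nonempty ∧ ∃ g ∈ G, s = g ∩ S}

/-- The set of coupled partitions `P ∪̃ Q`: partitions of `M ∪ N` whose trace
on `M` is `P` and whose trace on `N` is `Q`. -/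
def coupled {α : Type*} (M N : Set α) (P Q : Set (Set α)) : Set (Set (Set α)) :=
  {G | IsPartitionOn (M ∪ N) G ∧ trace M G = P ∧ trace N G = Q}

namespace Stmt8Aux

variable {α : Type*}

/-- Forward map: the matching induced by a coupling. -/
def fwd (M N : Set α) (G : Set (Set α)) : Set (Set α × Set α) :=
  {z | ∃ g ∈ G, (g ∩ M).Nonempty ∧ (g ∩ N).Nonempty ∧ z = (g ∩ M, g ∩ N)}

/-- Backward map: the coupling induced by a matching. -/
def bwd (P Q : Set (Set α)) (Z : Set (Set α × Set α)) : Set (Set α) :=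
  {b | (∃ z ∈ Z, b = z.1 ∪ z.2) ∨ (b ∈ P ∧ b ∉ Prod.fst '' Z) ∨
    (b ∈ Q ∧ b ∉ Prod.snd '' Z)}

lemma part_unique {S : Set α} {P : Set (Set α)} (h : IsPartitionOn S P)
    {p p' : Set α} (hp : p ∈ P) (hp' : p' ∈ P) {x : α} (hx : x ∈ p) (hx' : x ∈ p') :
    p = p' := by
  have hxS : x ∈ S := h.2.1 p hp hx
  obtain ⟨b, _, hb⟩ := h.2.2 x hxS
  rw [hb p ⟨hp, hx⟩, hb p' ⟨hp', hx'⟩]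

section Main

variable {M N : Set α} {P Q : Set (Set α)} (hMN : Disjoint M N)
  (hP : IsPartitionOn M P) (hQ : IsPartitionOn N Q)

/-- The good-matching predicate. -/
def ZGood (P Q : Set (Set α)) (Z : Set (Set α × Set α)) : Prop :=
  (∀ z ∈ Z, z.1 ∈ P ∧ z.2 ∈ Q) ∧ Set.InjOn Prod.fst Z ∧ Set.InjOn Prod.snd Z

lemma block_split {G : Set (Set α)} (hG : G ∈ coupled M N P Q) {g : Set α}
    (hg : g ∈ G) : g = (g ∩ M) ∪ (g ∩ N) := by
  have h1 : g ⊆ M ∪ N := hG.1.2.1 g hg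
  rw [← Set.inter_union_distrib_left, Set.inter_eq_left.mpr h1]

lemma fwd_good {G : Set (Set α)} (hG : G ∈ coupled M N P Q) :
    ZGood P Q (fwd M N G) := by
  refine ⟨?_, ?_, ?_⟩
  · rintro z ⟨g, hg, h1, h2, rfl⟩
    exact ⟨hG.2.1 ▸ ⟨h1, g, hg, rfl⟩, hG.2.2 ▸ ⟨h2, g, hg, rfl⟩⟩
  · rintro z ⟨g, hg, h1, h2, rfl⟩ z' ⟨g', hg', h1', h2', rfl⟩ he
    simp only [Prod.mk.injEq] at he ⊢
    obtain ⟨x, hx⟩ := h1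
    have hx' : x ∈ g' ∩ M := he ▸ hx
    have : g = g' := part_unique hG.1 hg hg' hx.1 hx'.1
    subst this; exact ⟨rfl, rfl⟩
  · rintro z ⟨g, hg, h1, h2, rfl⟩ z' ⟨g', hg', h1', h2', rfl⟩ he
    simp only [Prod.mk.injEq] at he ⊢
    obtain ⟨x, hx⟩ := h2
    have hx' : x ∈ g' ∩ N := he ▸ hx
    have : g = g' := part_unique hG.1 hg hg' hx.1 hx'.1
    subst this; exact ⟨rfl, rfl⟩

include hMN hP hQ in
/-- Where a point of `M` sits inside a block of `bwd P Q Z`. -/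
lemma mem_bwd_M {Z : Set (Set α × Set α)} (hZ : ZGood P Q Z) {b : Set α}
    (hb : b ∈ bwd P Q Z) {x : α} (hx : x ∈ b) (hxM : x ∈ M) :
    (b ∈ P ∧ b ∉ Prod.fst '' Z) ∨ ∃ z ∈ Z, x ∈ z.1 ∧ b = z.1 ∪ z.2 := by
  rcases hb with ⟨z, hz, rfl⟩ | ⟨hbP, hnb⟩ | ⟨hbQ, hnb⟩
  · rcases hx with hx | hx
    · exact Or.inr ⟨z, hz, hx, rfl⟩
    · exact absurd (hQ.2.1 z.2 (hZ.1 z hz).2 hx) (Set.disjoint_left.mp hMN hxM)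
  · exact Or.inl ⟨hbP, hnb⟩
  · exact absurd (hQ.2.1 b hbQ hx) (Set.disjoint_left.mp hMN hxM)

include hMN hP hQ in
lemma mem_bwd_N {Z : Set (Set α × Set α)} (hZ : ZGood P Q Z) {b : Set α}
    (hb : b ∈ bwd P Q Z) {x : α} (hx : x ∈ b) (hxN : x ∈ N) :
    (b ∈ Q ∧ b ∉ Prod.snd '' Z) ∨ ∃ z ∈ Z, x ∈ z.2 ∧ b = z.1 ∪ z.2 := by
  rcases hb with ⟨z, hz, rfl⟩ | ⟨hbP, hnb⟩ | ⟨hbQ, hnb⟩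
  · rcases hx with hx | hx
    · exact absurd (hP.2.1 z.1 (hZ.1 z hz).1 hx) (Set.disjoint_right.mp hMN hxN)
    · exact Or.inr ⟨z, hz, hx, rfl⟩
  · exact absurd (hP.2.1 b hbP hx) (Set.disjoint_right.mp hMN hxN)
  · exact Or.inl ⟨hbQ, hnb⟩

include hMN hP hQ in
lemma bwd_disjoint {Z : Set (Set α × Set α)} (hZ : ZGood P Q Z) {b b' : Set α}
    (hb : b ∈ bwd P Q Z) (hb' : b' ∈ bwd P Q Z) {x : α} (hx : x ∈ b)
    (hx' : x ∈ b') (hxMN : x ∈ M ∪ N) : b = b' := by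
  rcases hxMN with hxM | hxN
  · rcases mem_bwd_M hMN hP hQ hZ hb hx hxM with ⟨h1, h2⟩ | ⟨z, hz, hxz, rfl⟩ <;>
      rcases mem_bwd_M hMN hP hQ hZ hb' hx' hxM with ⟨h1', h2'⟩ | ⟨z', hz', hxz', rfl⟩
    · exact part_unique hP h1 h1' hx hx'
    · exact absurd ⟨z', hz', (part_unique hP (hZ.1 z' hz').1 h1 hxz' hx)⟩ h2
    · exact absurd ⟨z, hz, (part_unique hP (hZ.1 z hz).1 h1' hxz hx')⟩ h2'
    · have : z.1 = z'.1 := part_unique hP (hZ.1 z hz).1 (hZ.1 z' hz').1 hxz hxz'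
      rw [hZ.2.1 hz hz' this]
  · rcases mem_bwd_N hMN hP hQ hZ hb hx hxN with ⟨h1, h2⟩ | ⟨z, hz, hxz, rfl⟩ <;>
      rcases mem_bwd_N hMN hP hQ hZ hb' hx' hxN with ⟨h1', h2'⟩ | ⟨z', hz', hxz', rfl⟩
    · exact part_unique hQ h1 h1' hx hx'
    · exact absurd ⟨z', hz', (part_unique hQ (hZ.1 z' hz').2 h1 hxz' hx)⟩ h2
    · exact absurd ⟨z, hz, (part_unique hQ (hZ.1 z hz).2 h1' hxz hx')⟩ h2'
    · have : z.2 = z'.2 := part_unique hQ (hZ.1 z hz).2 (hZ.1 z' hz').2 hxz hxz'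
      rw [hZ.2.2 hz hz' this]

include hMN hP hQ in
lemma bwd_coupled {Z : Set (Set α × Set α)} (hZ : ZGood P Q Z) :
    bwd P Q Z ∈ coupled M N P Q := by
  have hPne : ∀ p ∈ P, p.Nonempty := fun p hp =>
    Set.nonempty_iff_ne_empty.mpr (fun h => hP.1 (h ▸ hp))
  have hQne : ∀ q ∈ Q, q.Nonempty := fun q hq =>
    Set.nonempty_iff_ne_empty.mpr (fun h => hQ.1 (h ▸ hq))
  have hpM : ∀ z ∈ Z, (z.1 ∪ z.2 : Set α) ∩ M = z.1 := by
    intro z hz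
    rw [Set.union_inter_distrib_right, Set.inter_eq_left.mpr (hP.2.1 z.1 (hZ.1 z hz).1),
      (hMN.symm.mono_left (hQ.2.1 z.2 (hZ.1 z hz).2)).inter_eq, Set.union_empty]
  have hpN : ∀ z ∈ Z, (z.1 ∪ z.2 : Set α) ∩ N = z.2 := by
    intro z hz
    rw [Set.union_inter_distrib_right, Set.inter_eq_left.mpr (hQ.2.1 z.2 (hZ.1 z hz).2),
      (hMN.mono_left (hP.2.1 z.1 (hZ.1 z hz).1)).inter_eq, Set.empty_union]
  refine ⟨⟨?_, ?_, ?_⟩, ?_, ?_⟩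
  · rintro (⟨z, hz, he⟩ | ⟨hp, -⟩ | ⟨hq, -⟩)
    · have hx : (z.1 ∪ z.2).Nonempty := (hPne z.1 (hZ.1 z hz).1).inl
      rw [← he] at hx
      exact hx.ne_empty rfl
    · exact hP.1 hp
    · exact hQ.1 hq
  · rintro b (⟨z, hz, rfl⟩ | ⟨hp, -⟩ | ⟨hq, -⟩)
    · exact Set.union_subset_union (hP.2.1 z.1 (hZ.1 z hz).1) (hQ.2.1 z.2 (hZ.1 z hz).2)
    · exact (hP.2.1 b hp).trans Set.subset_union_left
    · exact (hQ.2.1 b hq).trans Set.subset_union_right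
  · intro x hx
    have hex : ∃ b ∈ bwd P Q Z, x ∈ b := by
      rcases hx with hxM | hxN
      · obtain ⟨p, ⟨hp, hxp⟩, -⟩ := hP.2.2 x hxM
        by_cases hmem : p ∈ Prod.fst '' Z
        · obtain ⟨z, hz, rfl⟩ := hmem
          exact ⟨z.1 ∪ z.2, Or.inl ⟨z, hz, rfl⟩, Or.inl hxp⟩
        · exact ⟨p, Or.inr (Or.inl ⟨hp, hmem⟩), hxp⟩
      · obtain ⟨q, ⟨hq, hxq⟩, -⟩ := hQ.2.2 x hxN
        by_cases hmem : q ∈ Prod.snd '' Z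
        · obtain ⟨z, hz, rfl⟩ := hmem
          exact ⟨z.1 ∪ z.2, Or.inl ⟨z, hz, rfl⟩, Or.inr hxq⟩
        · exact ⟨q, Or.inr (Or.inr ⟨hq, hmem⟩), hxq⟩
    obtain ⟨b, hb, hxb⟩ := hex
    exact ⟨b, ⟨hb, hxb⟩, fun b' ⟨hb', hxb'⟩ =>
      bwd_disjoint hMN hP hQ hZ hb' hb hxb' hxb hx⟩
  · ext p
    constructor
    · rintro ⟨hne, b, (⟨z, hz, rfl⟩ | ⟨hp, -⟩ | ⟨hq, -⟩), rfl⟩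
      · rw [hpM z hz]; exact (hZ.1 z hz).1
      · rwa [Set.inter_eq_left.mpr (hP.2.1 b hp)]
      · rw [(hMN.symm.mono_left (hQ.2.1 b hq)).inter_eq] at hne
        exact absurd hne (by simp)
    · intro hp
      by_cases hmem : p ∈ Prod.fst '' Z
      · obtain ⟨z, hz, rfl⟩ := hmem
        exact ⟨hPne z.1 hp, z.1 ∪ z.2, Or.inl ⟨z, hz, rfl⟩, (hpM z hz).symm⟩
      · exact ⟨hPne p hp, p, Or.inr (Or.inl ⟨hp, hmem⟩),
          (Set.inter_eq_left.mpr (hP.2.1 p hp)).symm⟩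
  · ext q
    constructor
    · rintro ⟨hne, b, (⟨z, hz, rfl⟩ | ⟨hp, -⟩ | ⟨hq, -⟩), rfl⟩
      · rw [hpN z hz]; exact (hZ.1 z hz).2
      · rw [(hMN.mono_left (hP.2.1 b hp)).inter_eq] at hne
        exact absurd hne (by simp)
      · rwa [Set.inter_eq_left.mpr (hQ.2.1 b hq)]
    · intro hq
      by_cases hmem : q ∈ Prod.snd '' Z
      · obtain ⟨z, hz, rfl⟩ := hmem
        exact ⟨hQne z.2 hq, z.1 ∪ z.2, Or.inl ⟨z, hz, rfl⟩, (hpN z hz).symm⟩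
      · exact ⟨hQne q hq, q, Or.inr (Or.inr ⟨hq, hmem⟩),
          (Set.inter_eq_left.mpr (hQ.2.1 q hq)).symm⟩

include hMN hP hQ in
lemma left_inv {G : Set (Set α)} (hG : G ∈ coupled M N P Q) :
    bwd P Q (fwd M N G) = G := by
  ext b
  constructor
  · rintro (⟨z, ⟨g, hg, h1, h2, rfl⟩, rfl⟩ | ⟨hp, hnb⟩ | ⟨hq, hnb⟩)
    · exact (block_split hG hg) ▸ hg
    · obtain ⟨hne, g, hg, he⟩ : b ∈ trace M G := hG.2.1.symm ▸ hp
      by_cases h2 : (g ∩ N).Nonempty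
      · exact absurd ⟨(g ∩ M, g ∩ N), ⟨g, hg, he ▸ hne, h2, rfl⟩, he.symm⟩ hnb
      · have hgb : g = b := by
          rw [block_split hG hg, Set.not_nonempty_iff_eq_empty.mp h2,
            Set.union_empty, ← he]
        exact hgb ▸ hg
    · obtain ⟨hne, g, hg, he⟩ : b ∈ trace N G := hG.2.2.symm ▸ hq
      by_cases h1 : (g ∩ M).Nonempty
      · exact absurd ⟨(g ∩ M, g ∩ N), ⟨g, hg, h1, he ▸ hne, rfl⟩, he.symm⟩ hnb
      · have hgb : g = b := by
          rw [block_split hG hg, Set.not_nonempty_iff_eq_empty.mp h1,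
            Set.empty_union, ← he]
        exact hgb ▸ hg
  · intro hg
    have hbne : b.Nonempty := Set.nonempty_iff_ne_empty.mpr (fun h => hG.1.1 (h ▸ hg))
    by_cases h1 : (b ∩ M).Nonempty
    · by_cases h2 : (b ∩ N).Nonempty
      · exact Or.inl ⟨(b ∩ M, b ∩ N), ⟨b, hg, h1, h2, rfl⟩, block_split hG hg⟩
      · refine Or.inr (Or.inl ⟨?_, ?_⟩)
        · have hbM : b = b ∩ M := by
            conv_lhs => rw [block_split hG hg]
            rw [Set.not_nonempty_iff_eq_empty.mp h2, Set.union_empty]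
          exact hG.2.1 ▸ ⟨hbne, b, hg, hbM⟩
        · rintro ⟨z, ⟨g', hg', h1', h2', rfl⟩, he⟩
          simp only at he
          obtain ⟨x, hx⟩ := h1'
          have hgb : g' = b := part_unique hG.1 hg' hg hx.1 (he ▸ hx)
          exact h2 (hgb ▸ h2')
    · refine Or.inr (Or.inr ⟨?_, ?_⟩)
      · have hbN : b = b ∩ N := by
          conv_lhs => rw [block_split hG hg]
          rw [Set.not_nonempty_iff_eq_empty.mp h1, Set.empty_union]
        exact hG.2.2 ▸ ⟨hbne, b, hg, hbN⟩
      · rintro ⟨z, ⟨g', hg', h1', h2', rfl⟩, he⟩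
        simp only at he
        obtain ⟨x, hx⟩ := h2'
        have hgb : g' = b := part_unique hG.1 hg' hg hx.1 (he ▸ hx)
        exact h1 (hgb ▸ h1')

include hMN hP hQ in
lemma right_inv {Z : Set (Set α × Set α)} (hZ : ZGood P Q Z) :
    fwd M N (bwd P Q Z) = Z := by
  have hPne : ∀ p ∈ P, p.Nonempty := fun p hp =>
    Set.nonempty_iff_ne_empty.mpr (fun h => hP.1 (h ▸ hp))
  have hQne : ∀ q ∈ Q, q.Nonempty := fun q hq =>
    Set.nonempty_iff_ne_empty.mpr (fun h => hQ.1 (h ▸ hq))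
  have hpM : ∀ z ∈ Z, (z.1 ∪ z.2 : Set α) ∩ M = z.1 := by
    intro z hz
    rw [Set.union_inter_distrib_right, Set.inter_eq_left.mpr (hP.2.1 z.1 (hZ.1 z hz).1),
      (hMN.symm.mono_left (hQ.2.1 z.2 (hZ.1 z hz).2)).inter_eq, Set.union_empty]
  have hpN : ∀ z ∈ Z, (z.1 ∪ z.2 : Set α) ∩ N = z.2 := by
    intro z hz
    rw [Set.union_inter_distrib_right, Set.inter_eq_left.mpr (hQ.2.1 z.2 (hZ.1 z hz).2),
      (hMN.mono_left (hP.2.1 z.1 (hZ.1 z hz).1)).inter_eq, Set.empty_union]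
  ext z
  constructor
  · rintro ⟨b, (⟨z', hz', rfl⟩ | ⟨hp, hnb⟩ | ⟨hq, hnb⟩), h1, h2, rfl⟩
    · rw [hpM z' hz', hpN z' hz']
      exact hz'
    · rw [(hMN.mono_left (hP.2.1 b hp)).inter_eq] at h2
      exact absurd h2 (by simp)
    · rw [(hMN.symm.mono_left (hQ.2.1 b hq)).inter_eq] at h1
      exact absurd h1 (by simp)
  · intro hz
    refine ⟨z.1 ∪ z.2, Or.inl ⟨z, hz, rfl⟩, ?_, ?_, ?_⟩
    · rw [hpM z hz]; exact hPne z.1 (hZ.1 z hz).1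
    · rw [hpN z hz]; exact hQne z.2 (hZ.1 z hz).2
    · rw [hpM z hz, hpN z hz]

end Main

end Stmt8Aux

/-- Couplings are exactly pushouts along pairs of injections.  The quotient
`(P ⊔ Q)/∼_{f,g}` of a pair of injective total functions `f : R → P`,
`g : R → Q`, taken up to the matching it induces between blocks of `P` and
blocks of `Q`, is precisely the datum of a relation `Z ⊆ P × Q` whose two
coordinate projections are injective; so `P ∪̃ Q` is in bijection with the set
of such matchings. -/
theorem stmt8 {α : Type*} (M N : Set α) (P Q : Set (Set α))
    (hMN : Disjoint M N) (hM : M.Finite) (hN : N.Finite)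
    (hP : IsPartitionOn M P) (hQ : IsPartitionOn N Q) :
    Nonempty ((coupled M N P Q) ≃
      {Z : Set (Set α × Set α) //
        (∀ z ∈ Z, z.1 ∈ P ∧ z.2 ∈ Q) ∧
        Set.InjOn Prod.fst Z ∧ Set.InjOn Prod.snd Z}) := by
  refine ⟨{
    toFun := fun G => ⟨Stmt8Aux.fwd M N G.1, Stmt8Aux.fwd_good G.2⟩
    invFun := fun Z => ⟨Stmt8Aux.bwd P Q Z.1, Stmt8Aux.bwd_coupled hMN hP hQ Z.2⟩
    left_inv := fun G => Subtype.ext (Stmt8Aux.left_inv hMN hP hQ G.2)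
    right_inv := fun Z => Subtype.ext (Stmt8Aux.right_inv hMN hP hQ Z.2) }⟩
end

section
/- For disjoint nonempty finite sets M and N with P ∈ 𝒫(M) and Q ∈ 𝒫(N), the coupling set P ∪̃ Q is in bijection with the set of pairs ((p_q)_{q∈Q}, P̃) where the p_q are pairwise disjoint (possibly empty) subsets of M, P̃ is a collection of subsets of M, and (P̃ ∪ {p_q : q ∈ Q}) \ {∅} = P. -/
section Aux
variable {α : Type*}

lemma blk_eq {S : Set α} {G : Set (Set α)} (hG : IsPartitionOn S G)
    {g g' : Set α} (hg : g ∈ G) (hg' : g' ∈ G) {x : α} (hx : x ∈ g) (hx' : x ∈ g') :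
    g = g' := by
  obtain ⟨b, -, hu⟩ := hG.2.2 x (hG.2.1 g hg hx)
  rw [hu g ⟨hg, hx⟩, hu g' ⟨hg', hx'⟩]

lemma union_inter_left {M N s t : Set α} (hMN : Disjoint M N) (hs : s ⊆ M) (ht : t ⊆ N) :
    (s ∪ t) ∩ M = s := by
  rw [Set.union_inter_distrib_right, Set.inter_eq_left.mpr hs,
    (hMN.symm.mono_left ht).inter_eq, Set.union_empty]

lemma union_inter_right {M N s t : Set α} (hMN : Disjoint M N) (hs : s ⊆ M) (ht : t ⊆ N) :
    (s ∪ t) ∩ N = t := by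
  rw [Set.union_comm]; exact union_inter_left hMN.symm ht hs

end Aux

section Mem
variable {α : Type*} {M N : Set α} {P Q : Set (Set α)}

lemma couple_mem (hMN : Disjoint M N) (hQ : IsPartitionOn N Q)
    {p : Q → Set α} {Pt : Set (Set α)}
    (h1 : ∀ q, p q ⊆ M)
    (h2 : ∀ q q' : Q, q ≠ q' → Disjoint (p q) (p q'))
    (h3 : IsPartitionOn (M \ ⋃ q, p q) Pt)
    (h4 : (Pt ∪ Set.range p) \ {∅} = P) :
    (Pt ∪ {b | ∃ q : Q, b = p q ∪ ↑q}) ∈ coupled M N P Q := by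
  have hqN : ∀ q : Q, (q : Set α) ⊆ N := fun q => hQ.2.1 _ q.2
  have hqne : ∀ q : Q, (q : Set α) ≠ ∅ := fun q h => hQ.1 (h ▸ q.2)
  have hPtM : ∀ b ∈ Pt, b ⊆ M := fun b hb => (h3.2.1 b hb).trans Set.diff_subset
  have hcapM : ∀ q : Q, (p q ∪ ↑q) ∩ M = p q := fun q =>
    union_inter_left hMN (h1 q) (hqN q)
  have hcapN : ∀ q : Q, (p q ∪ ↑q) ∩ N = ↑q := fun q =>
    union_inter_right hMN (h1 q) (hqN q)
  refine ⟨⟨?_, ?_, ?_⟩, ?_, ?_⟩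
  · rintro (h | ⟨q, hq⟩)
    · exact h3.1 h
    · exact hqne q (Set.subset_empty_iff.mp (hq ▸ Set.subset_union_right))
  · rintro b (hb | ⟨q, rfl⟩)
    · exact (hPtM b hb).trans Set.subset_union_left
    · exact Set.union_subset ((h1 q).trans Set.subset_union_left)
        ((hqN q).trans Set.subset_union_right)
  · intro x hx
    by_cases hxN : x ∈ N
    · obtain ⟨q₀, ⟨hq₀Q, hxq₀⟩, huq⟩ := hQ.2.2 x hxN
      refine ⟨p ⟨q₀, hq₀Q⟩ ∪ q₀, ⟨Or.inr ⟨⟨q₀, hq₀Q⟩, rfl⟩, Or.inr hxq₀⟩, ?_⟩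
      rintro b ⟨(hb | ⟨q, rfl⟩), hxb⟩
      · exact absurd hxN (Set.disjoint_left.mp hMN (hPtM b hb hxb))
      · rcases hxb with hxp | hxq
        · exact absurd hxN (Set.disjoint_left.mp hMN (h1 q hxp))
        · have : q = ⟨q₀, hq₀Q⟩ := Subtype.ext (huq q.1 ⟨q.2, hxq⟩)
          rw [this]
    · have hxM : x ∈ M := hx.resolve_right hxN
      by_cases hxU : x ∈ ⋃ q, p q
      · obtain ⟨q₀, hxp⟩ := Set.mem_iUnion.mp hxU
        refine ⟨p q₀ ∪ q₀, ⟨Or.inr ⟨q₀, rfl⟩, Or.inl hxp⟩, ?_⟩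
        rintro b ⟨(hb | ⟨q, rfl⟩), hxb⟩
        · exact absurd hxU ((h3.2.1 b hb hxb).2)
        · rcases hxb with hxp' | hxq
          · by_contra hne
            have hqq : q ≠ q₀ := by rintro rfl; exact hne rfl
            exact Set.disjoint_left.mp (h2 q q₀ hqq) hxp' hxp
          · exact absurd (hqN q hxq) hxN
      · obtain ⟨b₀, ⟨hb₀, hxb₀⟩, hub⟩ := h3.2.2 x ⟨hxM, hxU⟩
        refine ⟨b₀, ⟨Or.inl hb₀, hxb₀⟩, ?_⟩
        rintro b ⟨(hb | ⟨q, rfl⟩), hxb⟩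
        · exact hub b ⟨hb, hxb⟩
        · rcases hxb with hxp | hxq
          · exact absurd (Set.mem_iUnion.mpr ⟨q, hxp⟩) hxU
          · exact absurd (hqN q hxq) hxN
  · rw [← h4]
    ext s
    constructor
    · rintro ⟨hsne, g, (hg | ⟨q, rfl⟩), rfl⟩
      · rw [Set.inter_eq_left.mpr (hPtM g hg)] at hsne ⊢
        exact ⟨Or.inl hg, hsne.ne_empty⟩
      · rw [hcapM q] at hsne ⊢
        exact ⟨Or.inr ⟨q, rfl⟩, hsne.ne_empty⟩
    · rintro ⟨(hs | ⟨q, rfl⟩), hne⟩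
      · exact ⟨Set.nonempty_iff_ne_empty.mpr hne, s, Or.inl hs,
          (Set.inter_eq_left.mpr (hPtM s hs)).symm⟩
      · exact ⟨Set.nonempty_iff_ne_empty.mpr hne, p q ∪ ↑q, Or.inr ⟨q, rfl⟩,
          (hcapM q).symm⟩
  · ext s
    constructor
    · rintro ⟨hsne, g, (hg | ⟨q, rfl⟩), rfl⟩
      · exact absurd ((hMN.mono_left (hPtM g hg)).inter_eq) hsne.ne_empty
      · rw [hcapN q]; exact q.2
    · intro hs
      exact ⟨Set.nonempty_iff_ne_empty.mpr (fun h => hQ.1 (h ▸ hs)),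
        p ⟨s, hs⟩ ∪ s, Or.inr ⟨⟨s, hs⟩, rfl⟩, (hcapN ⟨s, hs⟩).symm⟩

end Mem

section Inj
variable {α : Type*} {M N : Set α} {P Q : Set (Set α)}

lemma couple_Pt_eq (hMN : Disjoint M N) (hQ : IsPartitionOn N Q)
    {p : Q → Set α} {Pt : Set (Set α)}
    (h1 : ∀ q, p q ⊆ M)
    (h3 : IsPartitionOn (M \ ⋃ q, p q) Pt) :
    {b ∈ Pt ∪ {b | ∃ q : Q, b = p q ∪ ↑q} | b ∩ N = ∅} = Pt := by
  have hqN : ∀ q : Q, (q : Set α) ⊆ N := fun q => hQ.2.1 _ q.2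
  have hqne : ∀ q : Q, (q : Set α) ≠ ∅ := fun q h => hQ.1 (h ▸ q.2)
  have hPtM : ∀ b ∈ Pt, b ⊆ M := fun b hb => (h3.2.1 b hb).trans Set.diff_subset
  ext b
  constructor
  · rintro ⟨(hb | ⟨q, rfl⟩), hbN⟩
    · exact hb
    · exact absurd (union_inter_right hMN (h1 q) (hqN q) ▸ hbN) (hqne q)
  · intro hb
    exact ⟨Or.inl hb, (hMN.mono_left (hPtM b hb)).inter_eq⟩

lemma couple_inj (hMN : Disjoint M N) (hQ : IsPartitionOn N Q)
    {p p' : Q → Set α} {Pt Pt' : Set (Set α)}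
    (h1 : ∀ q, p q ⊆ M) (h1' : ∀ q, p' q ⊆ M)
    (h3 : IsPartitionOn (M \ ⋃ q, p q) Pt)
    (h3' : IsPartitionOn (M \ ⋃ q, p' q) Pt')
    (heq : Pt ∪ {b | ∃ q : Q, b = p q ∪ ↑q} = Pt' ∪ {b | ∃ q : Q, b = p' q ∪ ↑q}) :
    p = p' ∧ Pt = Pt' := by
  have hqN : ∀ q : Q, (q : Set α) ⊆ N := fun q => hQ.2.1 _ q.2
  have hqne : ∀ q : Q, (q : Set α) ≠ ∅ := fun q h => hQ.1 (h ▸ q.2)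
  have hPt : Pt = Pt' := by
    rw [← couple_Pt_eq hMN hQ h1 h3, ← couple_Pt_eq hMN hQ h1' h3', heq]
  refine ⟨funext fun q => ?_, hPt⟩
  have hmem : p q ∪ ↑q ∈ Pt' ∪ {b | ∃ q : Q, b = p' q ∪ ↑q} := by
    rw [← heq]; exact Or.inr ⟨q, rfl⟩
  rcases hmem with hb | ⟨q', hq'⟩
  · have hPtM' : p q ∪ ↑q ⊆ M := (h3'.2.1 _ hb).trans Set.diff_subset
    have : (p q ∪ ↑q) ∩ N = ∅ := (hMN.mono_left hPtM').inter_eq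
    rw [union_inter_right hMN (h1 q) (hqN q)] at this
    exact absurd this (hqne q)
  · have hN : (q : Set α) = ↑q' := by
      have := congrArg (· ∩ N) hq'
      simpa [union_inter_right hMN (h1 q) (hqN q),
        union_inter_right hMN (h1' q') (hqN q')] using this
    obtain rfl : q = q' := Subtype.ext hN
    have := congrArg (· ∩ M) hq'
    simpa [union_inter_left hMN (h1 q) (hqN q),
      union_inter_left hMN (h1' q) (hqN q)] using this

end Inj

section Surj
variable {α : Type*} {M N : Set α} {P Q : Set (Set α)}

lemma couple_surj (hMN : Disjoint M N) (hQ : IsPartitionOn N Q)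
    {G : Set (Set α)} (hG : G ∈ coupled M N P Q) :
    ∃ (p : Q → Set α) (Pt : Set (Set α)),
      (∀ q, p q ⊆ M) ∧
      (∀ q q' : Q, q ≠ q' → Disjoint (p q) (p q')) ∧
      IsPartitionOn (M \ ⋃ q, p q) Pt ∧
      (Pt ∪ Set.range p) \ {∅} = P ∧
      Pt ∪ {b | ∃ q : Q, b = p q ∪ ↑q} = G := by
  obtain ⟨hG1, hG2, hG3⟩ := hG
  have hqne : ∀ q : Q, (q : Set α) ≠ ∅ := fun q h => hQ.1 (h ▸ q.2)
  have hex : ∀ q : Q, ∃ g, g ∈ G ∧ (q : Set α) = g ∩ N := by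
    intro q
    have hq : (q : Set α) ∈ trace N G := hG3.symm ▸ q.2
    exact hq.2
  choose g hgG hgN using hex
  set p : Q → Set α := fun q => g q ∩ M with hp
  set Pt : Set (Set α) := {b | b ∈ G ∧ b ∩ N = ∅} with hPt
  -- b with nonempty N-trace is one of the g q
  have hbQ : ∀ b ∈ G, (b ∩ N).Nonempty → b ∩ N ∈ Q := fun b hb hne =>
    hG3 ▸ ⟨hne, b, hb, rfl⟩
  have hguniq : ∀ b ∈ G, ∀ q : Q, (q : Set α) = b ∩ N → b = g q := by
    intro b hb q hq
    obtain ⟨y, hy⟩ := Set.nonempty_iff_ne_empty.mpr (hqne q)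
    have hy1 : y ∈ b := by rw [hq] at hy; exact hy.1
    have hy2 : y ∈ g q := by rw [hgN q] at hy; exact hy.1
    exact blk_eq hG1 hb (hgG q) hy1 hy2
  have hPtM : ∀ b ∈ Pt, b ⊆ M := by
    rintro b ⟨hb, hbN⟩ x hx
    rcases hG1.2.1 b hb hx with hxM | hxN
    · exact hxM
    · have hmem : x ∈ b ∩ N := ⟨hx, hxN⟩
      rw [hbN] at hmem
      exact absurd hmem (Set.notMem_empty x)
  have h1 : ∀ q, p q ⊆ M := fun q => Set.inter_subset_right
  have hgne : ∀ q q' : Q, q ≠ q' → g q ≠ g q' := by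
    intro q q' hqq h
    exact hqq (Subtype.ext (by rw [hgN q, hgN q', h]))
  have hgdisj : ∀ q q' : Q, q ≠ q' → Disjoint (g q) (g q') := by
    intro q q' hqq
    rw [Set.disjoint_left]
    intro x hx hx'
    exact hgne q q' hqq (blk_eq hG1 (hgG q) (hgG q') hx hx')
  have h2 : ∀ q q' : Q, q ≠ q' → Disjoint (p q) (p q') := fun q q' hqq =>
    (hgdisj q q' hqq).mono Set.inter_subset_left Set.inter_subset_left
  -- blocks of Pt avoid the union
  have hPtU : ∀ b ∈ Pt, b ⊆ M \ ⋃ q, p q := by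
    rintro b hb x hx
    refine ⟨hPtM b hb hx, fun hxU => ?_⟩
    obtain ⟨q, hxq⟩ := Set.mem_iUnion.mp hxU
    have : b = g q := blk_eq hG1 hb.1 (hgG q) hx hxq.1
    exact hqne q (by rw [hgN q, ← this, hb.2])
  have h3 : IsPartitionOn (M \ ⋃ q, p q) Pt := by
    refine ⟨fun h => hG1.1 h.1, hPtU, ?_⟩
    rintro x ⟨hxM, hxU⟩
    obtain ⟨b, ⟨hb, hxb⟩, hub⟩ := hG1.2.2 x (Or.inl hxM)
    have hbN : b ∩ N = ∅ := by
      by_contra h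
      have hne := Set.nonempty_iff_ne_empty.mpr h
      have hq : b ∩ N ∈ Q := hbQ b hb hne
      have : b = g ⟨b ∩ N, hq⟩ := hguniq b hb ⟨b ∩ N, hq⟩ rfl
      exact hxU (Set.mem_iUnion.mpr ⟨⟨b ∩ N, hq⟩, this ▸ hxb, hxM⟩)
    exact ⟨b, ⟨⟨hb, hbN⟩, hxb⟩, fun b' hb' => hub b' ⟨hb'.1.1, hb'.2⟩⟩
  have h4 : (Pt ∪ Set.range p) \ {∅} = P := by
    rw [← hG2]
    ext s
    constructor
    · rintro ⟨(hs | ⟨q, rfl⟩), hne⟩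
      · exact ⟨Set.nonempty_iff_ne_empty.mpr hne, s, hs.1,
          (Set.inter_eq_left.mpr (hPtM s hs)).symm⟩
      · exact ⟨Set.nonempty_iff_ne_empty.mpr hne, g q, hgG q, rfl⟩
    · rintro ⟨hsne, b, hb, rfl⟩
      refine ⟨?_, hsne.ne_empty⟩
      by_cases hbN : b ∩ N = ∅
      · have : b ∩ M = b := Set.inter_eq_left.mpr (hPtM b ⟨hb, hbN⟩)
        rw [this]
        exact Or.inl ⟨hb, hbN⟩
      · have hq : b ∩ N ∈ Q := hbQ b hb (Set.nonempty_iff_ne_empty.mpr hbN)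
        have hbg : b = g ⟨b ∩ N, hq⟩ := hguniq b hb ⟨b ∩ N, hq⟩ rfl
        refine Or.inr ⟨⟨b ∩ N, hq⟩, ?_⟩
        show g ⟨b ∩ N, hq⟩ ∩ M = b ∩ M
        rw [← hbg]
  have hgsplit : ∀ q : Q, p q ∪ ↑q = g q := by
    intro q
    rw [hp, hgN q, ← Set.inter_union_distrib_left,
      Set.inter_eq_left.mpr (hG1.2.1 _ (hgG q))]
  have h5 : Pt ∪ {b | ∃ q : Q, b = p q ∪ ↑q} = G := by
    ext b
    constructor
    · rintro (hb | ⟨q, rfl⟩)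
      · exact hb.1
      · rw [hgsplit q]; exact hgG q
    · intro hb
      by_cases hbN : b ∩ N = ∅
      · exact Or.inl ⟨hb, hbN⟩
      · have hq : b ∩ N ∈ Q := hbQ b hb (Set.nonempty_iff_ne_empty.mpr hbN)
        have hbg : b = g ⟨b ∩ N, hq⟩ := hguniq b hb ⟨b ∩ N, hq⟩ rfl
        exact Or.inr ⟨⟨b ∩ N, hq⟩, by rw [hgsplit, ← hbg]⟩
  exact ⟨p, Pt, h1, h2, h3, h4, h5⟩

end Surj

/-- `P ∪̃ Q` is in bijection with the set of pairs `((p_q)_{q∈Q}, P̃)` where the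
`p_q` are pairwise disjoint (possibly empty) subsets of `M`, `P̃` is a
partition of the rest of `M`, and `(P̃ ∪ {p_q : q ∈ Q}) \ {∅} = P`. -/
theorem stmt9 {α : Type*} (M N : Set α) (P Q : Set (Set α))
    (hMN : Disjoint M N) (hM : M.Finite) (hN : N.Finite)
    (hMne : M.Nonempty) (hNne : N.Nonempty)
    (hP : IsPartitionOn M P) (hQ : IsPartitionOn N Q) :
    Nonempty ((coupled M N P Q) ≃
      {x : (Q → Set α) × Set (Set α) //
        (∀ q, x.1 q ⊆ M) ∧
        (∀ q q' : Q, q ≠ q' → Disjoint (x.1 q) (x.1 q')) ∧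
        IsPartitionOn (M \ ⋃ q, x.1 q) x.2 ∧
        (x.2 ∪ Set.range x.1) \ {∅} = P}) := by
  classical
  refine ⟨(Equiv.ofBijective
    (fun x => ⟨x.1.2 ∪ {b | ∃ q : Q, b = x.1.1 q ∪ ↑q},
      couple_mem hMN hQ x.2.1 x.2.2.1 x.2.2.2.1 x.2.2.2.2⟩) ⟨?_, ?_⟩).symm⟩
  · rintro ⟨⟨p, Pt⟩, hx⟩ ⟨⟨p', Pt'⟩, hy⟩ h
    have heq := congrArg Subtype.val h
    simp only at heq
    obtain ⟨hpp, hPP⟩ := couple_inj hMN hQ hx.1 hy.1 hx.2.2.1 hy.2.2.1 heq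
    exact Subtype.ext (Prod.ext hpp hPP)
  · rintro ⟨G, hG⟩
    obtain ⟨p, Pt, h1, h2, h3, h4, h5⟩ := couple_surj hMN hQ hG
    exact ⟨⟨⟨p, Pt⟩, h1, h2, h3, h4⟩, Subtype.ext h5⟩
end

section
/- For disjoint finite sets M, N and a fixed tagged partition (q_0, Q) of N, the set 𝒫(M)[q_0, Q] of tagged partitions of M indexed by {0} ∪ Q is in bijection with the disjoint union over tagged partitions (p_0, P) of M of the coupling sets P ∪̃ Q. -/
section Aux

variable {α : Type*}

lemma IsPartitionOn.blocks_disjoint {S : Set α} {G : Set (Set α)}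
    (h : IsPartitionOn S G) {g g' : Set α} (hg : g ∈ G) (hg' : g' ∈ G)
    (hne : g ≠ g') : Disjoint g g' := by
  rw [Set.disjoint_left]
  intro x hx hx'
  obtain ⟨p, -, hu⟩ := h.2.2 x (h.2.1 g hg hx)
  exact hne ((hu g ⟨hg, hx⟩).trans (hu g' ⟨hg', hx'⟩).symm)

lemma IsPartitionOn.block_nonempty {S : Set α} {G : Set (Set α)}
    (h : IsPartitionOn S G) {g : Set α} (hg : g ∈ G) : g.Nonempty :=
  Set.nonempty_iff_ne_empty.mpr fun he => h.1 (he ▸ hg)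

lemma qne {S : Set α} {Q : Set (Set α)} (hQ : IsPartitionOn S Q) (q : Q) :
    (q : Set α).Nonempty :=
  hQ.block_nonempty q.2

lemma unionInterN {M N q0 : Set α} {Q : Set (Set α)} (hMN : Disjoint M N)
    (hQ : IsPartitionOn (N \ q0) Q) {p : Set α} (hp : p ⊆ M) (q : Q) :
    (p ∪ (q : Set α)) ∩ (N \ q0) = q := by
  rw [Set.union_inter_distrib_right, (hMN.mono hp Set.diff_subset).inter_eq,
    Set.empty_union, Set.inter_eq_left.mpr (hQ.2.1 _ q.2)]

lemma unionInterM {M N q0 : Set α} {Q : Set (Set α)} (hMN : Disjoint M N)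
    (hQ : IsPartitionOn (N \ q0) Q) {p : Set α} (hp : p ⊆ M) (q : Q) :
    (p ∪ (q : Set α)) ∩ M = p := by
  rw [Set.union_inter_distrib_right, Set.inter_eq_left.mpr hp,
    (hMN.symm.mono_left ((hQ.2.1 _ q.2).trans Set.diff_subset)).inter_eq,
    Set.union_empty]

variable {M N q0 : Set α} {Q : Set (Set α)}

section Fwd

variable {p0 : Set α} {pq : Q → Set α} {Phat : Set (Set α)}

lemma fwdP (h2 : ∀ q, pq q ⊆ M) (h3 : ∀ q, Disjoint p0 (pq q))
    (h4 : ∀ q q' : Q, q ≠ q' → Disjoint (pq q) (pq q'))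
    (h5 : IsPartitionOn (M \ (p0 ∪ ⋃ q, pq q)) Phat) :
    IsPartitionOn (M \ p0) ((Phat ∪ Set.range pq) \ {∅}) := by
  have hpqM' : ∀ q, pq q ⊆ M \ p0 := fun q => Set.subset_diff.mpr ⟨h2 q, (h3 q).symm⟩
  refine ⟨fun h => h.2 rfl, ?_, ?_⟩
  · rintro p ⟨hp | ⟨q, rfl⟩, -⟩
    · exact (h5.2.1 p hp).trans (Set.diff_subset_diff_right Set.subset_union_left)
    · exact hpqM' q
  · intro x hx
    by_cases hex : ∃ q, x ∈ pq q
    · obtain ⟨q, hq⟩ := hex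
      refine ⟨pq q, ⟨⟨Or.inr ⟨q, rfl⟩, fun h => Set.notMem_empty x (h ▸ hq)⟩, hq⟩, ?_⟩
      rintro p ⟨⟨hp | ⟨q', rfl⟩, -⟩, hxp⟩
      · exact absurd (Or.inr (Set.mem_iUnion.mpr ⟨q, hq⟩)) (h5.2.1 p hp hxp).2
      · rcases eq_or_ne q' q with rfl | hne
        · rfl
        · exact absurd hq (Set.disjoint_left.mp (h4 q' q hne) hxp)
    · have hx' : x ∈ M \ (p0 ∪ ⋃ q, pq q) := by
        refine ⟨hx.1, ?_⟩
        rintro (h | h)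
        · exact hx.2 h
        · exact hex (Set.mem_iUnion.mp h)
      obtain ⟨p, ⟨hpP, hxp⟩, hu⟩ := h5.2.2 x hx'
      refine ⟨p, ⟨⟨Or.inl hpP, fun h => h5.1 (h ▸ hpP)⟩, hxp⟩, ?_⟩
      rintro p' ⟨⟨hp' | ⟨q', rfl⟩, -⟩, hxp'⟩
      · exact hu p' ⟨hp', hxp'⟩
      · exact absurd ⟨q', hxp'⟩ hex

lemma fwdG (hMN : Disjoint M N) (hQ : IsPartitionOn (N \ q0) Q)
    (h2 : ∀ q, pq q ⊆ M) (h3 : ∀ q, Disjoint p0 (pq q))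
    (h4 : ∀ q q' : Q, q ≠ q' → Disjoint (pq q) (pq q'))
    (h5 : IsPartitionOn (M \ (p0 ∪ ⋃ q, pq q)) Phat) :
    (Set.range (fun q : Q => pq q ∪ (q : Set α)) ∪ Phat) ∈
      coupled (M \ p0) (N \ q0) ((Phat ∪ Set.range pq) \ {∅}) Q := by
  have hpqM' : ∀ q, pq q ⊆ M \ p0 := fun q => Set.subset_diff.mpr ⟨h2 q, (h3 q).symm⟩
  have hPhatM' : ∀ g ∈ Phat, g ⊆ M \ p0 := fun g hg =>
    (h5.2.1 g hg).trans (Set.diff_subset_diff_right Set.subset_union_left)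
  have hqN : ∀ q : Q, (q : Set α) ⊆ N := fun q => (hQ.2.1 _ q.2).trans Set.diff_subset
  have keyN : ∀ q : Q, (pq q ∪ (q : Set α)) ∩ (N \ q0) = q :=
    fun q => unionInterN hMN hQ (h2 q) q
  have keyM' : ∀ q : Q, (pq q ∪ (q : Set α)) ∩ (M \ p0) = pq q := by
    intro q
    rw [Set.union_inter_distrib_right, Set.inter_eq_left.mpr (hpqM' q),
      (hMN.symm.mono_left (hqN q) |>.mono_right Set.diff_subset).inter_eq, Set.union_empty]
  refine ⟨⟨?_, ?_, ?_⟩, ?_, ?_⟩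
  · rintro (⟨q, hqe⟩ | h)
    · exact (qne hQ q).ne_empty (Set.subset_empty_iff.mp (hqe ▸ Set.subset_union_right))
    · exact h5.1 h
  · rintro g (⟨q, rfl⟩ | hg)
    · exact Set.union_subset ((hpqM' q).trans Set.subset_union_left)
        ((hQ.2.1 _ q.2).trans Set.subset_union_right)
    · exact (hPhatM' g hg).trans Set.subset_union_left
  · rintro x (hx | hx)
    · by_cases hex : ∃ q, x ∈ pq q
      · obtain ⟨q, hq⟩ := hex
        refine ⟨pq q ∪ q, ⟨Or.inl ⟨q, rfl⟩, Or.inl hq⟩, ?_⟩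
        rintro p ⟨⟨q', rfl⟩ | hp, hxp⟩
        · rcases hxp with hxp | hxp
          · rcases eq_or_ne q' q with rfl | hne
            · rfl
            · exact absurd hq (Set.disjoint_left.mp (h4 q' q hne) hxp)
          · exact absurd (hqN q' hxp) (Set.disjoint_left.mp hMN hx.1)
        · exact absurd (Or.inr (Set.mem_iUnion.mpr ⟨q, hq⟩)) (h5.2.1 p hp hxp).2
      · have hx' : x ∈ M \ (p0 ∪ ⋃ q, pq q) := by
          refine ⟨hx.1, ?_⟩
          rintro (h | h)
          · exact hx.2 h
          · exact hex (Set.mem_iUnion.mp h)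
        obtain ⟨p, ⟨hpP, hxp⟩, hu⟩ := h5.2.2 x hx'
        refine ⟨p, ⟨Or.inr hpP, hxp⟩, ?_⟩
        rintro p' ⟨⟨q', rfl⟩ | hp', hxp'⟩
        · rcases hxp' with hxp' | hxp'
          · exact absurd ⟨q', hxp'⟩ hex
          · exact absurd (hqN q' hxp') (Set.disjoint_left.mp hMN hx.1)
        · exact hu p' ⟨hp', hxp'⟩
    · obtain ⟨q, ⟨hqQ, hxq⟩, hu⟩ := hQ.2.2 x hx
      refine ⟨pq ⟨q, hqQ⟩ ∪ q, ⟨Or.inl ⟨⟨q, hqQ⟩, rfl⟩, Or.inr hxq⟩, ?_⟩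
      rintro p ⟨⟨q', rfl⟩ | hp, hxp⟩
      · rcases hxp with hxp | hxp
        · exact absurd (h2 q' hxp) (Set.disjoint_right.mp hMN hx.1)
        · have hq' : q' = (⟨q, hqQ⟩ : Q) := Subtype.ext (hu q' ⟨q'.2, hxp⟩)
          rw [hq']
      · exact absurd (hPhatM' p hp hxp).1 (Set.disjoint_right.mp hMN hx.1)
  · ext s
    constructor
    · rintro ⟨hne, g, (⟨q, rfl⟩ | hg), rfl⟩
      · rw [keyM' q] at hne ⊢
        exact ⟨Or.inr ⟨q, rfl⟩, hne.ne_empty⟩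
      · rw [Set.inter_eq_left.mpr (hPhatM' g hg)] at hne ⊢
        exact ⟨Or.inl hg, hne.ne_empty⟩
    · rintro ⟨hs | ⟨q, rfl⟩, hne⟩
      · exact ⟨Set.nonempty_iff_ne_empty.mpr hne, s, Or.inr hs,
          (Set.inter_eq_left.mpr (hPhatM' s hs)).symm⟩
      · exact ⟨Set.nonempty_iff_ne_empty.mpr hne, pq q ∪ q, Or.inl ⟨q, rfl⟩, (keyM' q).symm⟩
  · ext s
    constructor
    · rintro ⟨hne, g, (⟨q, rfl⟩ | hg), rfl⟩
      · rw [keyN q]; exact q.2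
      · exact absurd (hMN.mono ((hPhatM' g hg).trans Set.diff_subset)
          Set.diff_subset).inter_eq hne.ne_empty
    · intro hs
      exact ⟨qne hQ ⟨s, hs⟩, pq ⟨s, hs⟩ ∪ s, Or.inl ⟨⟨s, hs⟩, rfl⟩, (keyN ⟨s, hs⟩).symm⟩

lemma fwdPhat_eq (hMN : Disjoint M N) (hQ : IsPartitionOn (N \ q0) Q)
    (h5 : IsPartitionOn (M \ (p0 ∪ ⋃ q, pq q)) Phat) :
    Phat = {g ∈ (Set.range (fun q : Q => pq q ∪ (q : Set α)) ∪ Phat) |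
      g ∩ (N \ q0) = ∅} := by
  ext g
  constructor
  · intro hg
    exact ⟨Or.inr hg,
      (hMN.mono ((h5.2.1 g hg).trans Set.diff_subset) Set.diff_subset).inter_eq⟩
  · rintro ⟨⟨q, rfl⟩ | hg, hN⟩
    · obtain ⟨x, hx⟩ := qne hQ q
      exact absurd hN (Set.nonempty_iff_ne_empty.mp ⟨x, Or.inr hx, hQ.2.1 _ q.2 hx⟩)
    · exact hg

end Fwd

/-- The piece of `M` tagged by `q` recovered from a coupled partition `G`. -/
def invpq (M N q0 : Set α) (G : Set (Set α)) (q : Set α) : Set α :=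
  {x | x ∈ M ∧ ∃ g ∈ G, x ∈ g ∧ g ∩ (N \ q0) = q}

/-- The untagged blocks recovered from a coupled partition `G`. -/
def invPhat (N q0 : Set α) (G : Set (Set α)) : Set (Set α) :=
  {g ∈ G | g ∩ (N \ q0) = ∅}

section Inv

variable {P G : Set (Set α)} {p0 : Set α}

lemma guniq (hG : G ∈ coupled (M \ p0) (N \ q0) P Q) {g g' : Set α}
    (hg : g ∈ G) (hg' : g' ∈ G) (hne : (g ∩ (N \ q0)).Nonempty)
    (he : g ∩ (N \ q0) = g' ∩ (N \ q0)) : g = g' := by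
  obtain ⟨x, hx⟩ := hne
  by_contra hgg
  exact Set.disjoint_left.mp (hG.1.blocks_disjoint hg hg' hgg) hx.1 (he ▸ hx).1

lemma qmem_ex (hG : G ∈ coupled (M \ p0) (N \ q0) P Q) (q : Q) :
    ∃ g ∈ G, g ∩ (N \ q0) = q := by
  have hq : (q : Set α) ∈ trace (N \ q0) G := hG.2.2 ▸ q.2
  obtain ⟨-, g, hg, he⟩ := hq
  exact ⟨g, hg, he.symm⟩

lemma invpq_eq (hQ : IsPartitionOn (N \ q0) Q)
    (hG : G ∈ coupled (M \ p0) (N \ q0) P Q) (q : Q) {g : Set α}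
    (hg : g ∈ G) (he : g ∩ (N \ q0) = q) : invpq M N q0 G q = g ∩ M := by
  ext x
  constructor
  · rintro ⟨hxM, g', hg', hxg', he'⟩
    have hgg : g' = g := guniq hG hg' hg (he' ▸ qne hQ q) (he'.trans he.symm)
    exact ⟨hgg ▸ hxg', hxM⟩
  · rintro ⟨hxg, hxM⟩
    exact ⟨hxM, g, hg, hxg, he⟩

lemma gMeq (hMN : Disjoint M N) (hG : G ∈ coupled (M \ p0) (N \ q0) P Q)
    {g : Set α} (hg : g ∈ G) : g ∩ M = g ∩ (M \ p0) := by
  ext x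
  constructor
  · rintro ⟨hxg, hxM⟩
    rcases hG.1.2.1 g hg hxg with h | h
    · exact ⟨hxg, h⟩
    · exact absurd (Set.diff_subset h) (Set.disjoint_left.mp hMN hxM)
  · rintro ⟨hxg, hxM⟩
    exact ⟨hxg, hxM.1⟩

lemma phat_sub (hG : G ∈ coupled (M \ p0) (N \ q0) P Q) {g : Set α}
    (hg : g ∈ G) (hgN : g ∩ (N \ q0) = ∅) : g ⊆ M \ p0 := by
  intro x hxg
  rcases hG.1.2.1 g hg hxg with h | h
  · exact h
  · exact absurd hgN (Set.nonempty_iff_ne_empty.mp ⟨x, hxg, h⟩)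

lemma inv_mem (hMN : Disjoint M N) (hQ : IsPartitionOn (N \ q0) Q)
    (hp0 : p0 ⊆ M) (hG : G ∈ coupled (M \ p0) (N \ q0) P Q) :
    p0 ⊆ M ∧ (∀ q : Q, invpq M N q0 G q ⊆ M) ∧
    (∀ q : Q, Disjoint p0 (invpq M N q0 G q)) ∧
    (∀ q q' : Q, q ≠ q' → Disjoint (invpq M N q0 G q) (invpq M N q0 G q')) ∧
    IsPartitionOn (M \ (p0 ∪ ⋃ q : Q, invpq M N q0 G q)) (invPhat N q0 G) := by
  refine ⟨hp0, fun q x hx => hx.1, ?_, ?_, ?_, ?_, ?_⟩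
  · intro q
    rw [Set.disjoint_right]
    rintro x ⟨hxM, g, hg, hxg, he⟩
    rcases hG.1.2.1 g hg hxg with h | h
    · exact h.2
    · exact absurd hxM (Set.disjoint_right.mp hMN h.1)
  · intro q q' hne
    rw [Set.disjoint_left]
    rintro x ⟨hxM, g, hg, hxg, he⟩ ⟨-, g', hg', hxg', he'⟩
    rcases eq_or_ne g g' with rfl | hgg
    · exact hne (Subtype.ext (he ▸ he'))
    · exact Set.disjoint_left.mp (hG.1.blocks_disjoint hg hg' hgg) hxg hxg'
  · exact fun h => hG.1.1 h.1
  · rintro g ⟨hgG, hgN⟩ x hxg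
    refine ⟨(phat_sub hG hgG hgN hxg).1, ?_⟩
    rintro (h | h)
    · exact (phat_sub hG hgG hgN hxg).2 h
    · obtain ⟨q, -, g', hg', hxg', he'⟩ := Set.mem_iUnion.mp h
      have hgg : g ≠ g' := by
        intro hgg
        subst hgg
        rw [hgN] at he'
        exact (qne hQ q).ne_empty he'.symm
      exact Set.disjoint_left.mp (hG.1.blocks_disjoint hgG hg' hgg) hxg hxg'
  · intro x hx
    have hxM' : x ∈ M \ p0 := ⟨hx.1, fun h => hx.2 (Or.inl h)⟩
    obtain ⟨g, ⟨hgG, hxg⟩, hu⟩ := hG.1.2.2 x (Or.inl hxM')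
    have hgN : g ∩ (N \ q0) = ∅ := by
      by_contra h
      have hqQ : g ∩ (N \ q0) ∈ Q :=
        hG.2.2 ▸ ⟨Set.nonempty_iff_ne_empty.mpr h, g, hgG, rfl⟩
      exact hx.2 (Or.inr (Set.mem_iUnion.mpr ⟨⟨_, hqQ⟩, hx.1, g, hgG, hxg, rfl⟩))
    exact ⟨g, ⟨⟨hgG, hgN⟩, hxg⟩, fun p hp => hu p ⟨hp.1.1, hp.2⟩⟩

lemma invP (hMN : Disjoint M N) (hQ : IsPartitionOn (N \ q0) Q)
    (hG : G ∈ coupled (M \ p0) (N \ q0) P Q) :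
    (invPhat N q0 G ∪ Set.range (fun q : Q => invpq M N q0 G q)) \ {∅} = P := by
  rw [← hG.2.1]
  ext s
  constructor
  · rintro ⟨⟨hsG, hsN⟩ | ⟨q, rfl⟩, hne⟩
    · exact ⟨Set.nonempty_iff_ne_empty.mpr hne, s, hsG,
        (Set.inter_eq_left.mpr (phat_sub hG hsG hsN)).symm⟩
    · obtain ⟨g, hg, he⟩ := qmem_ex hG q
      have heq : invpq M N q0 G q = g ∩ (M \ p0) :=
        (invpq_eq hQ hG q hg he).trans (gMeq hMN hG hg)
      beta_reduce at hne ⊢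
      rw [heq] at hne ⊢
      exact ⟨Set.nonempty_iff_ne_empty.mpr hne, g, hg, rfl⟩
  · rintro ⟨hne, g, hg, rfl⟩
    by_cases hgN : g ∩ (N \ q0) = ∅
    · rw [Set.inter_eq_left.mpr (phat_sub hG hg hgN)] at hne ⊢
      exact ⟨Or.inl ⟨hg, hgN⟩, hne.ne_empty⟩
    · have hqQ : g ∩ (N \ q0) ∈ Q :=
        hG.2.2 ▸ ⟨Set.nonempty_iff_ne_empty.mpr hgN, g, hg, rfl⟩
      have heq : invpq M N q0 G (g ∩ (N \ q0)) = g ∩ (M \ p0) :=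
        (invpq_eq hQ hG ⟨_, hqQ⟩ hg rfl).trans (gMeq hMN hG hg)
      exact ⟨Or.inr ⟨⟨_, hqQ⟩, heq⟩, hne.ne_empty⟩

lemma invG (hMN : Disjoint M N) (hQ : IsPartitionOn (N \ q0) Q)
    (hG : G ∈ coupled (M \ p0) (N \ q0) P Q) :
    Set.range (fun q : Q => invpq M N q0 G q ∪ (q : Set α)) ∪ invPhat N q0 G = G := by
  ext g
  constructor
  · rintro (⟨q, rfl⟩ | ⟨hg, -⟩)
    · obtain ⟨g', hg', he⟩ := qmem_ex hG q
      have heq : invpq M N q0 G q = g' ∩ (M \ p0) :=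
        (invpq_eq hQ hG q hg' he).trans (gMeq hMN hG hg')
      beta_reduce
      rw [heq, ← he, ← Set.inter_union_distrib_left,
        Set.inter_eq_left.mpr (hG.1.2.1 g' hg')]
      exact hg'
    · exact hg
  · intro hg
    by_cases hgN : g ∩ (N \ q0) = ∅
    · exact Or.inr ⟨hg, hgN⟩
    · left
      have hqQ : g ∩ (N \ q0) ∈ Q :=
        hG.2.2 ▸ ⟨Set.nonempty_iff_ne_empty.mpr hgN, g, hg, rfl⟩
      refine ⟨⟨_, hqQ⟩, ?_⟩
      show invpq M N q0 G (g ∩ (N \ q0)) ∪ g ∩ (N \ q0) = g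
      rw [(invpq_eq hQ hG ⟨_, hqQ⟩ hg rfl).trans (gMeq hMN hG hg),
        ← Set.inter_union_distrib_left, Set.inter_eq_left.mpr (hG.1.2.1 g hg)]

end Inv

end Aux

/-- For a fixed tagged partition `(q₀, Q)` of `N`, the set `𝒫(M)[q₀,Q]` of
tagged partitions of `M` indexed by `{0} ∪ Q` is in bijection with the
disjoint union, over tagged partitions `(p₀, P)` of `M`, of the coupling sets
`P ∪̃ Q`. -/
theorem stmt10 {α : Type*} (M N : Set α) (q0 : Set α) (Q : Set (Set α))
    (hMN : Disjoint M N) (hM : M.Finite) (hN : N.Finite)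
    (hq0 : q0 ⊆ N) (hQ : IsPartitionOn (N \ q0) Q) :
    Nonempty (
      {x : Set α × (Q → Set α) × Set (Set α) //
        x.1 ⊆ M ∧ (∀ q, x.2.1 q ⊆ M) ∧
        (∀ q, Disjoint x.1 (x.2.1 q)) ∧
        (∀ q q' : Q, q ≠ q' → Disjoint (x.2.1 q) (x.2.1 q')) ∧
        IsPartitionOn (M \ (x.1 ∪ ⋃ q, x.2.1 q)) x.2.2} ≃
      (y : {y : Set α × Set (Set α) //
              y.1 ⊆ M ∧ IsPartitionOn (M \ y.1) y.2}) ×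
        (coupled (M \ y.val.1) (N \ q0) y.val.2 Q)) := by
  classical
  refine ⟨Equiv.ofBijective
    (fun x => ⟨⟨(x.val.1, (x.val.2.2 ∪ Set.range x.val.2.1) \ {∅}),
        x.2.1, fwdP x.2.2.1 x.2.2.2.1 x.2.2.2.2.1 x.2.2.2.2.2⟩,
      ⟨Set.range (fun q : Q => x.val.2.1 q ∪ (q : Set α)) ∪ x.val.2.2,
        fwdG hMN hQ x.2.2.1 x.2.2.2.1 x.2.2.2.2.1 x.2.2.2.2.2⟩⟩) ⟨?_, ?_⟩⟩
  · -- injectivity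
    rintro ⟨⟨p0, pq, Phat⟩, h1, h2, h3, h4, h5⟩ ⟨⟨p0', pq', Phat'⟩, h1', h2', h3', h4', h5'⟩ hab
    dsimp only at h2 h3 h4 h5 h2' h3' h4' h5'
    have hp0 : p0 = p0' := congrArg (fun z => z.1.val.1) hab
    have hGeq : Set.range (fun q : Q => pq q ∪ (q : Set α)) ∪ Phat =
        Set.range (fun q : Q => pq' q ∪ (q : Set α)) ∪ Phat' :=
      congrArg (fun z => z.2.val) hab
    have hpq : ∀ q : Q, pq q = pq' q := by
      intro q
      have hmem : pq q ∪ (q : Set α) ∈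
          Set.range (fun q : Q => pq' q ∪ (q : Set α)) ∪ Phat' := by
        rw [← hGeq]; exact Or.inl ⟨q, rfl⟩
      rcases hmem with ⟨q', he⟩ | hmem
      · have he' : pq' q' ∪ (q' : Set α) = pq q ∪ (q : Set α) := he
        have hq' : q' = q := by
          apply Subtype.ext
          have h := congrArg (· ∩ (N \ q0)) he'
          simp only [unionInterN hMN hQ (h2' q') q', unionInterN hMN hQ (h2 q) q] at h
          exact h
        subst hq'
        have h := congrArg (· ∩ M) he'
        simp only [unionInterM hMN hQ (h2' q') q', unionInterM hMN hQ (h2 q') q'] at h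
        exact h.symm
      · obtain ⟨x, hx⟩ := qne hQ q
        have hxM : x ∈ M := (h5'.2.1 _ hmem (Or.inr hx)).1
        exact absurd (Set.diff_subset (hQ.2.1 _ q.2 hx)) (Set.disjoint_left.mp hMN hxM)
    have hPhat : Phat = Phat' := by
      rw [fwdPhat_eq hMN hQ h5, fwdPhat_eq hMN hQ h5', hGeq]
    apply Subtype.ext
    show (p0, pq, Phat) = (p0', pq', Phat')
    rw [hp0, hPhat, funext hpq]
  · -- surjectivity
    rintro ⟨⟨⟨p0, P⟩, hp0, hP⟩, G, hGmem⟩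
    obtain ⟨hc1, hc2, hc3, hc4, hc5⟩ := inv_mem hMN hQ hp0 hGmem
    refine ⟨⟨(p0, fun q : Q => invpq M N q0 G q, invPhat N q0 G),
      hc1, hc2, hc3, hc4, hc5⟩, ?_⟩
    have hPeq : (invPhat N q0 G ∪ Set.range (fun q : Q => invpq M N q0 G q)) \ {∅} = P :=
      invP hMN hQ hGmem
    have hGeq : Set.range (fun q : Q => invpq M N q0 G q ∪ (q : Set α)) ∪ invPhat N q0 G = G :=
      invG hMN hQ hGmem
    refine Sigma.ext ?_ ?_
    · exact Subtype.ext (by dsimp; rw [hPeq])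
    · refine (Subtype.heq_iff_coe_eq ?_).mpr ?_
      · intro s
        dsimp
        rw [hPeq]
      · dsimp
        exact hGeq
end

section
/- The coupled deconcatenation coproduct on tagged Lions words is coassociative: (Δ ⊗̃ I) ∘ Δ = (I ⊗̃ Δ) ∘ Δ on the span of tagged Lions words. -/
open scoped Classical

/-- Raw data of a tagged Lions word over the alphabet `Fin d` with tag index
type `H`: a word together with a family of tagged position sets and a
collection of partition blocks. -/
structure RawWord (d : ℕ) (H : Type) : Type where
  len : ℕ
  letter : Fin len → Fin d
  tag : H → Set (Fin len)
  blocks : Set (Set (Fin len))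

/-- The raw data is an actual tagged Lions word: the tagged sets are pairwise
disjoint and the blocks partition the untagged positions. -/
def RawWord.Valid {d : ℕ} {H : Type} (W : RawWord d H) : Prop :=
  (∀ h h' : H, h ≠ h' → Disjoint (W.tag h) (W.tag h')) ∧
  IsPartitionOn ((Set.univ : Set (Fin W.len)) \ ⋃ h, W.tag h) W.blocks

/-- Inclusion of the first `i` positions. -/
def castL {n : ℕ} (i : Fin (n + 1)) (j : Fin i.val) : Fin n :=
  ⟨j.val, by have h1 := j.isLt; have h2 := i.isLt; omega⟩

/-- Inclusion of the last `n - i` positions. -/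
def castR {n : ℕ} (i : Fin (n + 1)) (j : Fin (n - i.val)) : Fin n :=
  ⟨i.val + j.val, by have h1 := j.isLt; have h2 := i.isLt; omega⟩

/-- Restriction of a tagged Lions word to its first `i` positions, with
hyperedges given by traces. -/
def leftWord {d : ℕ} {H : Type} (W : RawWord d H) (i : Fin (W.len + 1)) :
    RawWord d H where
  len := i.val
  letter := fun j => W.letter (castL i j)
  tag := fun h => castL i ⁻¹' W.tag h
  blocks := {s | s.Nonempty ∧ ∃ p ∈ W.blocks, s = castL i ⁻¹' p}

/-- Restriction of a tagged Lions word to its last `len - i` positions, with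
hyperedges given by traces. -/
def rightWord {d : ℕ} {H : Type} (W : RawWord d H) (i : Fin (W.len + 1)) :
    RawWord d H where
  len := W.len - i.val
  letter := fun j => W.letter (castR i j)
  tag := fun h => castR i ⁻¹' W.tag h
  blocks := {s | s.Nonempty ∧ ∃ p ∈ W.blocks, s = castR i ⁻¹' p}

/-- An element of the coupled tensor square of tagged Lions words: a pair of
words together with a coupling between their positions (recording which
blocks come from a common original hyperedge). -/
structure CPair (d : ℕ) (H : Type) : Type where
  W1 : RawWord d H
  W2 : RawWord d H
  cpl : Set (Set (Fin W1.len ⊕ Fin W2.len))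

/-- An element of the coupled triple tensor of tagged Lions words. -/
structure CTriple (d : ℕ) (H : Type) : Type where
  W1 : RawWord d H
  W2 : RawWord d H
  W3 : RawWord d H
  cpl : Set (Set (Fin W1.len ⊕ Fin W2.len ⊕ Fin W3.len))

/-- Reassembly of a split word's positions. -/
def splitMap {d : ℕ} {H : Type} (W : RawWord d H) (i : Fin (W.len + 1)) :
    Fin i.val ⊕ Fin (W.len - i.val) → Fin W.len :=
  Sum.elim (castL i) (castR i)

/-- The coupled deconcatenation coproduct on tagged Lions words:
`Δ[W] = Σ_{i=0}^{n} W^{(i,1)} ×^P W^{(i,2)}`, the coupling being the original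
partition `P` pushed to the split positions. -/
noncomputable def coDelta {d : ℕ} {H : Type} (R : Type) [CommRing R]
    (W : RawWord d H) : CPair d H →₀ R :=
  ∑ i : Fin (W.len + 1),
    Finsupp.single
      ⟨leftWord W i, rightWord W i,
        {s | s.Nonempty ∧ ∃ p ∈ W.blocks, s = splitMap W i ⁻¹' p}⟩ 1

/-- `Δ ⊗̃ I`: deconcatenate the first factor of a coupled pair, propagating
the coupling. -/
noncomputable def deltaL {d : ℕ} {H : Type} (R : Type) [CommRing R]
    (c : CPair d H) : CTriple d H →₀ R :=
  ∑ j : Fin (c.W1.len + 1),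
    Finsupp.single
      ⟨leftWord c.W1 j, rightWord c.W1 j, c.W2,
        {s | s.Nonempty ∧ ∃ g ∈ c.cpl,
          s = (Sum.elim (fun a => Sum.inl (castL j a))
                (Sum.elim (fun b => Sum.inl (castR j b)) Sum.inr)) ⁻¹' g}⟩ 1

/-- `I ⊗̃ Δ`: deconcatenate the second factor of a coupled pair, propagating
the coupling. -/
noncomputable def deltaR {d : ℕ} {H : Type} (R : Type) [CommRing R]
    (c : CPair d H) : CTriple d H →₀ R :=
  ∑ j : Fin (c.W2.len + 1),
    Finsupp.single
      ⟨c.W1, leftWord c.W2 j, rightWord c.W2 j,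
        {s | s.Nonempty ∧ ∃ g ∈ c.cpl,
          s = (Sum.elim Sum.inl
                (Sum.elim (fun a => Sum.inr (castL j a))
                  (fun b => Sum.inr (castR j b)))) ⁻¹' g}⟩ 1

/-! ### Auxiliary machinery -/

@[simp] theorem castL_val {n : ℕ} (i : Fin (n + 1)) (j : Fin i.val) :
    (castL i j).val = j.val := rfl

@[simp] theorem castR_val {n : ℕ} (i : Fin (n + 1)) (j : Fin (n - i.val)) :
    (castR i j).val = i.val + j.val := rfl

/-- Restriction of a word along an arbitrary position map. -/
def restrict {d : ℕ} {H : Type} (W : RawWord d H) {m : ℕ} (F : Fin m → Fin W.len) :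
    RawWord d H where
  len := m
  letter := fun k => W.letter (F k)
  tag := fun h => F ⁻¹' W.tag h
  blocks := {s | s.Nonempty ∧ ∃ p ∈ W.blocks, s = F ⁻¹' p}

theorem blocks_comp {α β γ : Type*} (u : α → β) (v : β → γ) (B : Set (Set γ)) :
    {s : Set α | s.Nonempty ∧
        ∃ t ∈ {t : Set β | t.Nonempty ∧ ∃ p ∈ B, t = v ⁻¹' p}, s = u ⁻¹' t}
      = {s : Set α | s.Nonempty ∧ ∃ p ∈ B, s = (fun x => v (u x)) ⁻¹' p} := by
  ext s
  constructor
  · rintro ⟨hne, t, ⟨-, p, hp, rfl⟩, rfl⟩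
    exact ⟨hne, p, hp, rfl⟩
  · rintro ⟨hne, p, hp, rfl⟩
    obtain ⟨x, hx⟩ := hne
    exact ⟨⟨x, hx⟩, v ⁻¹' p, ⟨⟨u x, hx⟩, p, hp, rfl⟩, rfl⟩

theorem restrict_restrict {d : ℕ} {H : Type} (W : RawWord d H) {m m' : ℕ}
    (F : Fin m → Fin W.len) (G : Fin m' → Fin m) :
    restrict (restrict W F) G = restrict W (fun x => F (G x)) := by
  unfold restrict
  congr 1
  exact blocks_comp G F W.blocks

theorem restrict_cast {d : ℕ} {H : Type} (W : RawWord d H) {m m' : ℕ} (h : m = m')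
    (F : Fin m → Fin W.len) (F' : Fin m' → Fin W.len)
    (hF : ∀ x, F x = F' (Fin.cast h x)) : restrict W F = restrict W F' := by
  subst h
  have hFF : F = F' := funext fun x => hF x
  rw [hFF]

theorem heq_setF {n a b c a' b' c' : ℕ} (h1 : a = a') (h2 : b = b') (h3 : c = c')
    (B : Set (Set (Fin n)))
    (F : Fin a ⊕ Fin b ⊕ Fin c → Fin n) (F' : Fin a' ⊕ Fin b' ⊕ Fin c' → Fin n)
    (hF : ∀ x, F x = F' (Sum.map (Fin.cast h1) (Sum.map (Fin.cast h2) (Fin.cast h3)) x)) :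
    HEq {s : Set (Fin a ⊕ Fin b ⊕ Fin c) | s.Nonempty ∧ ∃ p ∈ B, s = F ⁻¹' p}
        {s : Set (Fin a' ⊕ Fin b' ⊕ Fin c') | s.Nonempty ∧ ∃ p ∈ B, s = F' ⁻¹' p} := by
  subst h1; subst h2; subst h3
  have hFF : F = F' := funext fun x => by rcases x with x | x | x <;> exact hF _
  rw [hFF]

theorem CTriple.ext' {d : ℕ} {H : Type} {T T' : CTriple d H}
    (h1 : T.W1 = T'.W1) (h2 : T.W2 = T'.W2) (h3 : T.W3 = T'.W3)
    (hc : HEq T.cpl T'.cpl) : T = T' := by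
  obtain ⟨a, b, c, s⟩ := T
  obtain ⟨a', b', c', s'⟩ := T'
  dsimp only at h1 h2 h3 hc
  subst h1; subst h2; subst h3
  rw [eq_of_heq hc]

theorem sigma_fin_ext {n : ℕ} {f : Fin (n + 1) → ℕ}
    {p q : Σ i : Fin (n + 1), Fin (f i)} (h1 : p.1 = q.1) (h2 : p.2.val = q.2.val) :
    p = q := by
  obtain ⟨a, b⟩ := p
  obtain ⟨a', b'⟩ := q
  dsimp only at h1 h2
  subst h1
  rw [Fin.ext h2]

theorem eq_left_left {d : ℕ} {H : Type} (W : RawWord d H) (i : Fin (W.len + 1))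
    (j : Fin (i.val + 1)) (i' : Fin (W.len + 1)) (h : i'.val = j.val) :
    leftWord (leftWord W i) j = leftWord W i' := by
  show restrict (restrict W (castL i)) (castL j) = restrict W (castL i')
  rw [restrict_restrict]
  exact restrict_cast W h.symm _ _ (fun x => Fin.ext (by simp))

theorem eq_mid {d : ℕ} {H : Type} (W : RawWord d H) (i : Fin (W.len + 1))
    (j : Fin (i.val + 1)) (i' : Fin (W.len + 1)) (j' : Fin (W.len - i'.val + 1))
    (h : i'.val = j.val) (h2 : j'.val = i.val - j.val) :
    rightWord (leftWord W i) j = leftWord (rightWord W i') j' := by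
  show restrict (restrict W (castL i)) (castR j)
      = restrict (restrict W (castR i')) (castL j')
  rw [restrict_restrict, restrict_restrict]
  exact restrict_cast W h2.symm _ _ (fun x => Fin.ext (by simp; omega))

theorem eq_right_right {d : ℕ} {H : Type} (W : RawWord d H) (i : Fin (W.len + 1))
    (j : Fin (i.val + 1)) (i' : Fin (W.len + 1)) (j' : Fin (W.len - i'.val + 1))
    (h : i'.val = j.val) (h2 : j'.val = i.val - j.val) :
    rightWord W i = rightWord (rightWord W i') j' := by
  show restrict W (castR i) = restrict (restrict W (castR i')) (castR j')
  rw [restrict_restrict]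
  have hi := i.isLt
  have hj := j.isLt
  have hi' := i'.isLt
  have hj' := j'.isLt
  refine restrict_cast W (by omega) _ _ (fun x => Fin.ext ?_)
  simp
  omega

theorem eq_cpl {d : ℕ} (H : Type) (W : RawWord d H) (i : Fin (W.len + 1))
    (j : Fin (i.val + 1)) (i' : Fin (W.len + 1)) (j' : Fin (W.len - i'.val + 1))
    (h : i'.val = j.val) (h2 : j'.val = i.val - j.val) :
    HEq
      {s : Set (Fin j.val ⊕ Fin (i.val - j.val) ⊕ Fin (W.len - i.val)) |
        s.Nonempty ∧
        ∃ g ∈ {g : Set (Fin i.val ⊕ Fin (W.len - i.val)) |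
            g.Nonempty ∧ ∃ p ∈ W.blocks, g = splitMap W i ⁻¹' p},
          s = (Sum.elim (fun a => Sum.inl (castL j a))
                (Sum.elim (fun b => Sum.inl (castR j b)) Sum.inr)) ⁻¹' g}
      {s : Set (Fin i'.val ⊕ Fin j'.val ⊕ Fin (W.len - i'.val - j'.val)) |
        s.Nonempty ∧
        ∃ g ∈ {g : Set (Fin i'.val ⊕ Fin (W.len - i'.val)) |
            g.Nonempty ∧ ∃ p ∈ W.blocks, g = splitMap W i' ⁻¹' p},
          s = (Sum.elim Sum.inl
                (Sum.elim (fun a => Sum.inr (castL j' a))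
                  (fun b => Sum.inr (castR j' b)))) ⁻¹' g} := by
  have hi := i.isLt
  have hj := j.isLt
  have hi' := i'.isLt
  have hj' := j'.isLt
  refine HEq.trans (heq_of_eq (blocks_comp _ (splitMap W i) W.blocks)) ?_
  refine HEq.trans ?_ (heq_of_eq (blocks_comp _ (splitMap W i') W.blocks).symm)
  refine heq_setF h.symm h2.symm (by omega) W.blocks _ _ ?_
  rintro (x | x | x) <;>
    · apply Fin.ext
      simp only [splitMap, Sum.elim_inl, Sum.elim_inr, Sum.map_inl, Sum.map_inr,
        castL_val, castR_val, Fin.coe_cast]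
      try omega

theorem key_triple {d : ℕ} (H : Type) (W : RawWord d H) (i : Fin (W.len + 1))
    (j : Fin (i.val + 1)) (i' : Fin (W.len + 1)) (j' : Fin (W.len - i'.val + 1))
    (h : i'.val = j.val) (h2 : j'.val = i.val - j.val) :
    (⟨leftWord (leftWord W i) j, rightWord (leftWord W i) j, rightWord W i,
      {s | s.Nonempty ∧
        ∃ g ∈ {g : Set (Fin i.val ⊕ Fin (W.len - i.val)) |
            g.Nonempty ∧ ∃ p ∈ W.blocks, g = splitMap W i ⁻¹' p},
          s = (Sum.elim (fun a => Sum.inl (castL j a))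
                (Sum.elim (fun b => Sum.inl (castR j b)) Sum.inr)) ⁻¹' g}⟩ : CTriple d H)
    = ⟨leftWord W i', leftWord (rightWord W i') j', rightWord (rightWord W i') j',
      {s | s.Nonempty ∧
        ∃ g ∈ {g : Set (Fin i'.val ⊕ Fin (W.len - i'.val)) |
            g.Nonempty ∧ ∃ p ∈ W.blocks, g = splitMap W i' ⁻¹' p},
          s = (Sum.elim Sum.inl
                (Sum.elim (fun a => Sum.inr (castL j' a))
                  (fun b => Sum.inr (castR j' b)))) ⁻¹' g}⟩ := by
  refine CTriple.ext' ?_ ?_ ?_ ?_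
  · exact eq_left_left W i j i' h
  · exact eq_mid W i j i' j' h h2
  · exact eq_right_right W i j i' j' h h2
  · exact eq_cpl H W i j i' j' h h2

/-- Coassociativity of the coupled deconcatenation coproduct on tagged Lions
words: `(Δ ⊗̃ I) ∘ Δ = (I ⊗̃ Δ) ∘ Δ` on the span of tagged Lions words. -/
theorem stmt14 (d : ℕ) (H : Type) (R : Type) [CommRing R]
    (W : RawWord d H) (hW : W.Valid) :
    ((coDelta R W).sum fun c r => r • deltaL R c)
      = ((coDelta R W).sum fun c r => r • deltaR R c) := by
  have hsum : ∀ g : CPair d H → CTriple d H →₀ R,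
      ((coDelta R W).sum fun c r => r • g c)
        = ∑ i : Fin (W.len + 1),
            g ⟨leftWord W i, rightWord W i,
               {s | s.Nonempty ∧ ∃ p ∈ W.blocks, s = splitMap W i ⁻¹' p}⟩ := by
    intro g
    unfold coDelta
    refine ((Finsupp.sum_finset_sum_index (fun a => zero_smul R (g a))
        (fun a b₁ b₂ => add_smul b₁ b₂ (g a))).symm).trans ?_
    refine Finset.sum_congr rfl fun i _ => ?_
    refine (Finsupp.sum_single_index ?_).trans (one_smul _ _)
    exact zero_smul R _
  rw [hsum, hsum]
  simp only [deltaL, deltaR]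
  rw [Finset.sum_sigma', Finset.sum_sigma']
  refine Finset.sum_nbij'
    (fun p => ⟨⟨p.2.val, by
        have h1 := p.1.isLt
        have h2 := p.2.isLt
        have h3 : (leftWord W p.1).len = p.1.val := rfl
        omega⟩,
      ⟨p.1.val - p.2.val, by
        have h1 := p.1.isLt
        have h2 := p.2.isLt
        have h3 : (leftWord W p.1).len = p.1.val := rfl
        show p.1.val - p.2.val < W.len - p.2.val + 1
        omega⟩⟩)
    (fun q => ⟨⟨q.1.val + q.2.val, by
        have h1 := q.1.isLt
        have h2 := q.2.isLt
        have h3 : (rightWord W q.1).len = W.len - q.1.val := rfl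
        omega⟩,
      ⟨q.1.val, by
        have h1 := q.1.isLt
        have h2 := q.2.isLt
        have h3 : (rightWord W q.1).len = W.len - q.1.val := rfl
        show q.1.val < q.1.val + q.2.val + 1
        omega⟩⟩)
    (fun p _ => Finset.mem_sigma.mpr ⟨Finset.mem_univ _, Finset.mem_univ _⟩)
    (fun q _ => Finset.mem_sigma.mpr ⟨Finset.mem_univ _, Finset.mem_univ _⟩)
    (fun p _ => by
      have h1 := p.1.isLt
      have h2 := p.2.isLt
      have h3 : (leftWord W p.1).len = p.1.val := rfl
      refine sigma_fin_ext (Fin.ext ?_) ?_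
      · show p.2.val + (p.1.val - p.2.val) = p.1.val
        omega
      · rfl)
    (fun q _ => by
      have h1 := q.1.isLt
      have h2 := q.2.isLt
      have h3 : (rightWord W q.1).len = W.len - q.1.val := rfl
      refine sigma_fin_ext (Fin.ext ?_) ?_
      · exact rfl
      · show q.1.val + q.2.val - q.1.val = q.2.val
        omega)
    (fun p _ => by
      exact congrArg (fun t => Finsupp.single t (1 : R))
        (key_triple H W p.1 p.2 _ _ rfl rfl))
end

section
/- Every labelled Lions forest can be constructed from the empty forest by finitely many applications of the forest product ⊛, the decoupling operation ℰ, and the rooting operations ⌊·⌋_i for i ∈ {1,...,d}; that is, the completion of {1} under these operations equals the set of all labelled Lions forests. -/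
open scoped Classical

/-- Raw data of a labelled Lions forest: a finite set of nodes (in the
universe `ℕ`), a parent map (roots are the fixed points), a tagged hyperedge
`h₀`, a collection of partition blocks, and a (partial) labelling by
`{1,…,d}`. -/
structure LForest (d : ℕ) : Type where
  nodes : Finset ℕ
  par : ℕ → ℕ
  h0 : Set ℕ
  blocks : Set (Set ℕ)
  lab : ℕ → Option (Fin d)

/-- The depth of a node: the distance to the root of its component. -/
noncomputable def fdepth {d : ℕ} (F : LForest d) (x : ℕ) : ℕ :=
  sInf {n : ℕ | F.par (F.par^[n] x) = F.par^[n] x}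

/-- The hyperedges of a Lions forest: `H' = (H ∪ {h₀}) \ {∅}`. -/
def hyper {d : ℕ} (F : LForest d) : Set (Set ℕ) :=
  (F.blocks ∪ {F.h0}) \ {(∅ : Set ℕ)}

/-- The data is an actual labelled Lions forest: `(nodes, par)` is a directed
forest (normalised with `par x = x` and `lab x = none` off the nodes, every
node labelled), `h₀` is a tagged subset, the blocks partition `nodes \ h₀`,
making the nodes a 1-regular hypergraph, and the hyperedges satisfy the Lions
conditions (2.1)–(2.3): a nonempty `h₀` contains a root; for `x, y` in a
common hyperedge with `depth x < depth y` the parent of `y` is in that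
hyperedge; and equal-depth members of a common hyperedge with distinct
parents have both parents in that hyperedge. -/
def IsLionsForest {d : ℕ} (F : LForest d) : Prop :=
  (∀ x ∈ F.nodes, F.par x ∈ F.nodes) ∧
  (∀ x : ℕ, x ∉ F.nodes → F.par x = x) ∧
  (∀ x ∈ F.nodes, ∃ n : ℕ, F.par (F.par^[n] x) = F.par^[n] x) ∧
  (∀ x : ℕ, x ∉ F.nodes → F.lab x = none) ∧
  (∀ x ∈ F.nodes, F.lab x ≠ none) ∧
  F.h0 ⊆ (↑F.nodes : Set ℕ) ∧
  IsPartitionOn ((↑F.nodes : Set ℕ) \ F.h0) F.blocks ∧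
  (F.h0.Nonempty → ∃ x ∈ F.h0, F.par x = x) ∧
  (∀ h ∈ hyper F, ∀ x ∈ h, ∀ y ∈ h,
    fdepth F x < fdepth F y → F.par y ∈ h) ∧
  (∀ h ∈ hyper F, ∀ x ∈ h, ∀ y ∈ h,
    F.par x ≠ x → F.par y ≠ y → fdepth F x = fdepth F y →
      F.par x ≠ F.par y → (F.par x ∈ h ∧ F.par y ∈ h))

/-- The forest product `⊛`: disjoint union of nodes, edges, tagged sets,
blocks and labels. -/
def fprod {d : ℕ} (T₁ T₂ : LForest d) : LForest d where
  nodes := T₁.nodes ∪ T₂.nodes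
  par := fun x => if x ∈ T₁.nodes then T₁.par x else T₂.par x
  h0 := T₁.h0 ∪ T₂.h0
  blocks := T₁.blocks ∪ T₂.blocks
  lab := fun x => if x ∈ T₁.nodes then T₁.lab x else T₂.lab x

/-- The decoupling operation `ℰ`: empty the tagged hyperedge, turning `h₀`
into an ordinary block. -/
def fdec {d : ℕ} (T : LForest d) : LForest d where
  nodes := T.nodes
  par := T.par
  h0 := ∅
  blocks := (T.blocks ∪ {T.h0}) \ {(∅ : Set ℕ)}
  lab := T.lab

/-- The rooting operation `⌊·⌋ᵢ`: adjoin a new node `x₀` labelled `i`, attach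
all roots to it, and add it to the tagged hyperedge. -/
def froot {d : ℕ} (T : LForest d) (i : Fin d) (x₀ : ℕ) : LForest d where
  nodes := insert x₀ T.nodes
  par := fun x => if x ∈ T.nodes ∧ T.par x = x then x₀ else T.par x
  h0 := T.h0 ∪ {x₀}
  blocks := T.blocks
  lab := Function.update T.lab x₀ (some i)

/-- The completion of the empty forest `𝟏` under the product `⊛`, the
decoupling `ℰ` and the rooting operations `⌊·⌋ᵢ`. -/
inductive Gen (d : ℕ) : LForest d → Prop
  | one : Gen d ⟨∅, id, ∅, ∅, fun _ => none⟩
  | prod {T₁ T₂ : LForest d} :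
      Gen d T₁ → Gen d T₂ → Disjoint T₁.nodes T₂.nodes → Gen d (fprod T₁ T₂)
  | dec {T : LForest d} : Gen d T → Gen d (fdec T)
  | root {T : LForest d} (i : Fin d) (x₀ : ℕ) :
      Gen d T → x₀ ∉ T.nodes → Gen d (froot T i x₀)

section ForestInfrastructure

variable {d : ℕ}

/-- the set whose infimum is `fdepth` -/
def fixSet (F : LForest d) (x : ℕ) : Set ℕ :=
  {n : ℕ | F.par (F.par^[n] x) = F.par^[n] x}

lemma fdepth_eq_sInf_fixSet (F : LForest d) (x : ℕ) : fdepth F x = sInf (fixSet F x) := rfl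

lemma fixSet_succ {F : LForest d} {x : ℕ} {n : ℕ} :
    n + 1 ∈ fixSet F x ↔ n ∈ fixSet F (F.par x) := by
  simp [fixSet, Function.iterate_succ_apply]

lemma fixSet_zero {F : LForest d} {x : ℕ} : 0 ∈ fixSet F x ↔ F.par x = x := by simp [fixSet]

lemma fdepth_eq_zero {F : LForest d} {x : ℕ} (h : F.par x = x) : fdepth F x = 0 :=
  Nat.sInf_eq_zero.mpr (Or.inl (by simpa [fixSet] using h))

lemma fdepth_spec {F : LForest d} {x : ℕ} (h : (fixSet F x).Nonempty) :
    F.par (F.par^[fdepth F x] x) = F.par^[fdepth F x] x := Nat.sInf_mem h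

lemma fixSet_tail {F : LForest d} {x : ℕ} (h : (fixSet F x).Nonempty) (hx : F.par x ≠ x) :
    (fixSet F (F.par x)).Nonempty := by
  obtain ⟨n, hn⟩ := h
  match n with
  | 0 => exact absurd (fixSet_zero.mp hn) hx
  | n + 1 => exact ⟨n, fixSet_succ.mp hn⟩

lemma fdepth_succ {F : LForest d} {x : ℕ} (h : (fixSet F x).Nonempty) (hx : F.par x ≠ x) :
    fdepth F x = fdepth F (F.par x) + 1 := by
  have h' := fixSet_tail h hx
  apply le_antisymm
  · exact Nat.sInf_le (fixSet_succ.mpr (Nat.sInf_mem h'))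
  · have hm : fdepth F x ∈ fixSet F x := Nat.sInf_mem h
    match hd : fdepth F x with
    | 0 => exact absurd (fixSet_zero.mp (hd ▸ hm)) hx
    | k + 1 =>
      rw [hd] at hm
      have : k ∈ fixSet F (F.par x) := fixSet_succ.mp hm
      exact Nat.succ_le_succ (Nat.sInf_le this)

lemma par_eq_of_fdepth_eq_zero {F : LForest d} {x : ℕ} (h : (fixSet F x).Nonempty)
    (hd : fdepth F x = 0) : F.par x = x := by
  have := fdepth_spec h
  rwa [hd] at this

lemma fdepth_pos {F : LForest d} {x : ℕ} (h : (fixSet F x).Nonempty) (hx : F.par x ≠ x) :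
    0 < fdepth F x := by
  rcases Nat.eq_zero_or_pos (fdepth F x) with h0 | h0
  · exact absurd (par_eq_of_fdepth_eq_zero h h0) hx
  · exact h0

/-- the root of the component of `x` -/
noncomputable def rt (F : LForest d) (x : ℕ) : ℕ := F.par^[fdepth F x] x

lemma rt_fix {F : LForest d} {x : ℕ} (h : (fixSet F x).Nonempty) : F.par (rt F x) = rt F x :=
  fdepth_spec h

lemma rt_of_fix {F : LForest d} {x : ℕ} (h : F.par x = x) : rt F x = x := by
  simp [rt, fdepth_eq_zero h]

lemma rt_par {F : LForest d} {x : ℕ} (h : (fixSet F x).Nonempty) (hx : F.par x ≠ x) :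
    rt F (F.par x) = rt F x := by
  rw [rt, rt, fdepth_succ h hx, Function.iterate_succ_apply]

lemma iterate_congr {F G : LForest d} {x : ℕ} {S : Set ℕ}
    (h : ∀ y ∈ S, F.par y = G.par y ∧ F.par y ∈ S) (hx : x ∈ S) :
    ∀ n, F.par^[n] x = G.par^[n] x ∧ F.par^[n] x ∈ S := by
  intro n
  induction n with
  | zero => exact ⟨rfl, hx⟩
  | succ n ih =>
    obtain ⟨he, hm⟩ := ih
    obtain ⟨h1, h2⟩ := h _ hm
    rw [Function.iterate_succ_apply', Function.iterate_succ_apply']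
    exact ⟨by rw [← he, h1], h2⟩

lemma fixSet_congr {F G : LForest d} {x : ℕ} {S : Set ℕ}
    (h : ∀ y ∈ S, F.par y = G.par y ∧ F.par y ∈ S) (hx : x ∈ S) :
    fixSet F x = fixSet G x := by
  ext n
  obtain ⟨he, hm⟩ := iterate_congr h hx n
  simp only [fixSet, Set.mem_setOf_eq]
  rw [he] at hm ⊢
  rw [(h _ hm).1]

lemma fdepth_congr {F G : LForest d} {x : ℕ} {S : Set ℕ}
    (h : ∀ y ∈ S, F.par y = G.par y ∧ F.par y ∈ S) (hx : x ∈ S) :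
    fdepth F x = fdepth G x := by
  rw [fdepth_eq_sInf_fixSet, fdepth_eq_sInf_fixSet, fixSet_congr h hx]

end ForestInfrastructure

section LionsHelpers

variable {d : ℕ} {F : LForest d}

lemma nonempty_fixSet (hT : IsLionsForest F) {x : ℕ} (hx : x ∈ F.nodes) :
    (fixSet F x).Nonempty := hT.2.2.1 x hx

lemma nonempty_fixSet' (hT : IsLionsForest F) (x : ℕ) : (fixSet F x).Nonempty := by
  by_cases hx : x ∈ F.nodes
  · exact nonempty_fixSet hT hx
  · exact ⟨0, fixSet_zero.mpr (hT.2.1 x hx)⟩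

lemma blocks_sub (hT : IsLionsForest F) {b : Set ℕ} (hb : b ∈ F.blocks) :
    b ⊆ (↑F.nodes : Set ℕ) \ F.h0 := hT.2.2.2.2.2.2.1.2.1 b hb

lemma hyper_sub (hT : IsLionsForest F) {h : Set ℕ} (hh : h ∈ hyper F) :
    h ⊆ (↑F.nodes : Set ℕ) := by
  rcases hh.1 with hb | hb
  · exact (blocks_sub hT hb).trans (Set.diff_subset)
  · rw [Set.mem_singleton_iff.mp hb]
    exact hT.2.2.2.2.2.1

lemma rt_mem (hT : IsLionsForest F) {x : ℕ} (hx : x ∈ F.nodes) : rt F x ∈ F.nodes := by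
  rw [rt]
  generalize fdepth F x = n
  induction n with
  | zero => exact hx
  | succ n ih => rw [Function.iterate_succ_apply']; exact hT.1 _ ih

lemma h0_mem_hyper (hn : F.h0.Nonempty) : F.h0 ∈ hyper F :=
  ⟨Or.inr rfl, by simpa using hn.ne_empty⟩

lemma block_mem_hyper (hT : IsLionsForest F) {b : Set ℕ} (hb : b ∈ F.blocks) : b ∈ hyper F := by
  refine ⟨Or.inl hb, by simp; intro h; exact hT.2.2.2.2.2.2.1.1 (h ▸ hb)⟩

/-- the parent of a non-root member of `h₀` stays in `h₀` -/
lemma h0_par_mem (hT : IsLionsForest F) {y : ℕ} (hy : y ∈ F.h0) (hny : F.par y ≠ y) :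
    F.par y ∈ F.h0 := by
  obtain ⟨r, hr, hrfix⟩ := hT.2.2.2.2.2.2.2.1 ⟨y, hy⟩
  have hyn : y ∈ F.nodes := hT.2.2.2.2.2.1 hy
  have hdy : 0 < fdepth F y := fdepth_pos (nonempty_fixSet hT hyn) hny
  have hdr : fdepth F r = 0 := fdepth_eq_zero hrfix
  exact hT.2.2.2.2.2.2.2.2.1 F.h0 (h0_mem_hyper ⟨y, hy⟩) r hr y hy (hdr ▸ hdy)

/-- Lemma A: a hyperedge containing a root contains the root of each of its members -/
lemma lemA (hT : IsLionsForest F) {h : Set ℕ} (hh : h ∈ hyper F) {ρ : ℕ} (hρ : ρ ∈ h)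
    (hρfix : F.par ρ = ρ) : ∀ y ∈ h, rt F y ∈ h := by
  intro y hy
  have hyn : y ∈ F.nodes := hyper_sub hT hh hy
  generalize hk : fdepth F y = k
  induction k using Nat.strong_induction_on generalizing y with
  | _ k ih =>
    have hne := nonempty_fixSet hT hyn
    match k with
    | 0 =>
      rw [rt_of_fix (par_eq_of_fdepth_eq_zero hne hk)]; exact hy
    | k + 1 =>
      have hny : F.par y ≠ y := fun hc => by simp [fdepth_eq_zero hc] at hk
      have hp : F.par y ∈ h := hT.2.2.2.2.2.2.2.2.1 h hh ρ hρ y hy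
        (by rw [fdepth_eq_zero hρfix, hk]; omega)
      have hd : fdepth F (F.par y) = k := by
        have := fdepth_succ hne hny; omega
      rw [← rt_par hne hny]
      exact ih k (by omega) _ hp (hyper_sub hT hh hp) hd

/-- Lemma B: a hyperedge containing no root lies in a single tree -/
lemma lemB (hT : IsLionsForest F) {h : Set ℕ} (hh : h ∈ hyper F)
    (hnr : ∀ w ∈ h, F.par w ≠ w) : ∀ y ∈ h, ∀ z ∈ h, rt F y = rt F z := by
  intro y hy z hz
  generalize hk : fdepth F y + fdepth F z = k
  induction k using Nat.strong_induction_on generalizing y z with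
  | _ k ih =>
    have hyn : y ∈ F.nodes := hyper_sub hT hh hy
    have hzn : z ∈ F.nodes := hyper_sub hT hh hz
    have hney := nonempty_fixSet hT hyn
    have hnez := nonempty_fixSet hT hzn
    have hdy : 0 < fdepth F y := fdepth_pos hney (hnr y hy)
    have hdz : 0 < fdepth F z := fdepth_pos hnez (hnr z hz)
    rcases lt_trichotomy (fdepth F y) (fdepth F z) with hlt | heq | hgt
    · have hp : F.par z ∈ h := hT.2.2.2.2.2.2.2.2.1 h hh y hy z hz hlt
      have hdp : fdepth F (F.par z) + 1 = fdepth F z := (fdepth_succ hnez (hnr z hz)).symm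
      rw [← rt_par hnez (hnr z hz)]
      exact ih (fdepth F y + fdepth F (F.par z)) (by omega) y hy _ hp rfl
    · by_cases hpp : F.par y = F.par z
      · rw [← rt_par hney (hnr y hy), ← rt_par hnez (hnr z hz), hpp]
      · obtain ⟨hpy, hpz⟩ := hT.2.2.2.2.2.2.2.2.2 h hh y hy z hz (hnr y hy) (hnr z hz) heq hpp
        have hdy' : fdepth F (F.par y) + 1 = fdepth F y := (fdepth_succ hney (hnr y hy)).symm
        rw [← rt_par hney (hnr y hy), ← rt_par hnez (hnr z hz)]
        have hdz' : fdepth F (F.par z) + 1 = fdepth F z := (fdepth_succ hnez (hnr z hz)).symm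
        exact ih (fdepth F (F.par y) + fdepth F (F.par z)) (by omega) _ hpy _ hpz rfl
    · have hp : F.par y ∈ h := hT.2.2.2.2.2.2.2.2.1 h hh z hz y hy hgt
      have hdp : fdepth F (F.par y) + 1 = fdepth F y := (fdepth_succ hney (hnr y hy)).symm
      rw [← rt_par hney (hnr y hy)]
      exact ih (fdepth F (F.par y) + fdepth F z) (by omega) _ hp z hz rfl

/-- Lemma D: all members of a block have the same root, provided one of them has its
root in `h₀`. -/
lemma lemD (hT : IsLionsForest F) {b : Set ℕ} (hb : b ∈ F.blocks) {y : ℕ} (hy : y ∈ b)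
    (hrt : rt F y ∈ F.h0) : ∀ z ∈ b, rt F z = rt F y := by
  intro z hz
  by_cases hroot : ∃ ρ ∈ b, F.par ρ = ρ
  · obtain ⟨ρ, hρ, hρfix⟩ := hroot
    have := lemA hT (block_mem_hyper hT hb) hρ hρfix y hy
    exact absurd hrt (fun hc => (blocks_sub hT hb this).2 hc)
  · push_neg at hroot
    exact lemB hT (block_mem_hyper hT hb) hroot z hz y hy

/-- Lemma G: if a hyperedge contains a root `ρ` and another node in the tree of `ρ`,
it contains a child of `ρ`. -/
lemma lemG (hT : IsLionsForest F) {h : Set ℕ} (hh : h ∈ hyper F) {ρ : ℕ} (hρ : ρ ∈ h)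
    (hρfix : F.par ρ = ρ) : ∀ y ∈ h, y ≠ ρ → rt F y = ρ → ∃ z ∈ h, z ≠ ρ ∧ F.par z = ρ := by
  intro y hy hyne hyrt
  have hyn : y ∈ F.nodes := hyper_sub hT hh hy
  generalize hk : fdepth F y = k
  induction k using Nat.strong_induction_on generalizing y with
  | _ k ih =>
    have hne := nonempty_fixSet hT hyn
    have hny : F.par y ≠ y := by
      intro hc
      exact hyne (by rw [← hyrt, rt_of_fix hc])
    match k with
    | 0 => exact absurd (par_eq_of_fdepth_eq_zero hne hk) hny
    | 1 =>
      refine ⟨y, hy, hyne, ?_⟩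
      have : rt F y = F.par^[1] y := by rw [rt, hk]
      simpa [← hyrt, this]
    | k + 2 =>
      have hp : F.par y ∈ h := hT.2.2.2.2.2.2.2.2.1 h hh ρ hρ y hy
        (by rw [fdepth_eq_zero hρfix, hk]; omega)
      have hd : fdepth F (F.par y) = k + 1 := by
        have := fdepth_succ hne hny; omega
      have hpne : F.par y ≠ ρ := by
        intro hc
        rw [hc, fdepth_eq_zero hρfix] at hd; omega
      exact ih (k + 1) (by omega) _ hp hpne
        (by rw [rt_par hne hny]; exact hyrt) (hT.1 y hyn) hd

end LionsHelpers

section Backward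

variable {d : ℕ}

lemma lions_one : IsLionsForest (⟨∅, id, ∅, ∅, fun _ => none⟩ : LForest d) := by
  refine ⟨?_, ?_, ?_, ?_, ?_, ?_, ⟨?_, ?_, ?_⟩, ?_, ?_, ?_⟩ <;>
    simp [hyper, IsPartitionOn]

lemma lions_fdec {T : LForest d} (hT : IsLionsForest T) : IsLionsForest (fdec T) := by
  obtain ⟨P1, P2, P3, P4, P5, P6, ⟨Q1, Q2, Q3⟩, P8, P9, P10⟩ := hT
  have hhyper : hyper (fdec T) = hyper T := by
    ext b
    simp only [hyper, fdec, Set.mem_diff, Set.mem_union, Set.mem_singleton_iff]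
    tauto
  have hdepth : ∀ x, fdepth (fdec T) x = fdepth T x := fun x => rfl
  refine ⟨P1, P2, P3, P4, P5, ?_, ⟨?_, ?_, ?_⟩, ?_, ?_, ?_⟩
  · simp [fdec]
  · -- ∅ ∉ blocks'
    simp [fdec]
  · -- blocks' ⊆ nodes \ ∅
    rintro p ⟨hp | hp, hpne⟩
    · intro z hz; simpa [fdec] using ((Q2 p hp) hz).1
    · rw [Set.mem_singleton_iff.mp hp]
      simpa [fdec] using P6
  · -- existence and uniqueness
    intro x hx
    have hx' : x ∈ (↑T.nodes : Set ℕ) := by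
      simpa [fdec] using hx
    clear hx; rename' hx' => hx
    by_cases hxh : x ∈ T.h0
    · refine ⟨T.h0, ⟨⟨Or.inr rfl, ?_⟩, hxh⟩, ?_⟩
      · simpa using (Set.nonempty_of_mem hxh).ne_empty
      · rintro p ⟨⟨hp | hp, hpne⟩, hxp⟩
        · exact absurd hxh (fun _ => (Q2 p hp hxp).2 hxh)
        · exact Set.mem_singleton_iff.mp hp
    · obtain ⟨p, ⟨hp, hxp⟩, hpu⟩ := Q3 x ⟨hx, hxh⟩
      refine ⟨p, ⟨⟨Or.inl hp, ?_⟩, hxp⟩, ?_⟩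
      · simp only [Set.mem_singleton_iff]
        intro h; subst h; exact Q1 hp
      · rintro q ⟨⟨hq | hq, hqne⟩, hxq⟩
        · exact hpu q ⟨hq, hxq⟩
        · exact absurd (Set.mem_singleton_iff.mp hq ▸ hxq) hxh
  · -- 2.1: h0 = ∅
    simp [fdec]
  · -- 2.2
    rw [hhyper]
    intro h hh x hx y hy hd
    exact P9 h hh x hx y hy hd
  · -- 2.3
    rw [hhyper]
    intro h hh x hx y hy h1 h2 h3 h4
    exact P10 h hh x hx y hy h1 h2 h3 h4

lemma lions_fprod {T₁ T₂ : LForest d} (h1 : IsLionsForest T₁) (h2 : IsLionsForest T₂)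
    (hdisj : Disjoint T₁.nodes T₂.nodes) : IsLionsForest (fprod T₁ T₂) := by
  obtain ⟨A1, A2, A3, A4, A5, A6, ⟨U1, U2, U3⟩, A8, A9, A10⟩ := h1
  obtain ⟨B1, B2, B3, B4, B5, B6, ⟨V1, V2, V3⟩, B8, B9, B10⟩ := h2
  set F := fprod T₁ T₂ with hF
  have hnd : ∀ x ∈ T₂.nodes, x ∉ T₁.nodes := fun x hx hc =>
    Finset.disjoint_left.mp hdisj hc hx
  have hpar1 : ∀ x ∈ T₁.nodes, F.par x = T₁.par x := by
    intro x hx; simp [hF, fprod, hx]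
  have hpar2 : ∀ x ∈ T₂.nodes, F.par x = T₂.par x := by
    intro x hx; simp [hF, fprod, hnd x hx]
  have hcong1 : ∀ y ∈ (↑T₁.nodes : Set ℕ), F.par y = T₁.par y ∧ F.par y ∈ (↑T₁.nodes : Set ℕ) :=
    fun y hy => ⟨hpar1 y hy, by rw [hpar1 y hy]; simpa using A1 y hy⟩
  have hcong2 : ∀ y ∈ (↑T₂.nodes : Set ℕ), F.par y = T₂.par y ∧ F.par y ∈ (↑T₂.nodes : Set ℕ) :=
    fun y hy => ⟨hpar2 y hy, by rw [hpar2 y hy]; simpa using B1 y hy⟩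
  have hdep1 : ∀ x ∈ T₁.nodes, fdepth F x = fdepth T₁ x :=
    fun x hx => fdepth_congr hcong1 (by simpa using hx)
  have hdep2 : ∀ x ∈ T₂.nodes, fdepth F x = fdepth T₂ x :=
    fun x hx => fdepth_congr hcong2 (by simpa using hx)
  have hfix1 : ∀ x ∈ T₁.nodes, fixSet F x = fixSet T₁ x :=
    fun x hx => fixSet_congr hcong1 (by simpa using hx)
  have hfix2 : ∀ x ∈ T₂.nodes, fixSet F x = fixSet T₂ x :=
    fun x hx => fixSet_congr hcong2 (by simpa using hx)
  have hb1sub : ∀ b ∈ T₁.blocks, b ⊆ (↑T₁.nodes : Set ℕ) \ T₁.h0 := U2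
  have hb2sub : ∀ b ∈ T₂.blocks, b ⊆ (↑T₂.nodes : Set ℕ) \ T₂.h0 := V2
  -- the key helper: a non-root member of `h0ᵢ` has its `Tᵢ`-parent in `h0ᵢ`
  have hH1 : ∀ y ∈ T₁.h0, T₁.par y ≠ y → T₁.par y ∈ T₁.h0 := by
    intro y hy hny
    exact h0_par_mem ⟨A1, A2, A3, A4, A5, A6, ⟨U1, U2, U3⟩, A8, A9, A10⟩ hy hny
  have hH2 : ∀ y ∈ T₂.h0, T₂.par y ≠ y → T₂.par y ∈ T₂.h0 := by
    intro y hy hny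
    exact h0_par_mem ⟨B1, B2, B3, B4, B5, B6, ⟨V1, V2, V3⟩, B8, B9, B10⟩ hy hny
  have hnodes : F.nodes = T₁.nodes ∪ T₂.nodes := rfl
  have hhyp : hyper F = (T₁.blocks ∪ T₂.blocks ∪ {T₁.h0 ∪ T₂.h0}) \ {(∅ : Set ℕ)} := rfl
  refine ⟨?_, ?_, ?_, ?_, ?_, ?_, ⟨?_, ?_, ?_⟩, ?_, ?_, ?_⟩
  · -- closure
    intro x hx
    rw [hnodes, Finset.mem_union] at hx ⊢
    rcases hx with hx | hx
    · rw [hpar1 x hx]; exact Or.inl (A1 x hx)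
    · rw [hpar2 x hx]; exact Or.inr (B1 x hx)
  · -- normalisation
    intro x hx
    rw [hnodes, Finset.mem_union] at hx
    push_neg at hx
    show (if x ∈ T₁.nodes then T₁.par x else T₂.par x) = x
    rw [if_neg hx.1]
    exact B2 x hx.2
  · -- termination
    intro x hx
    rw [hnodes, Finset.mem_union] at hx
    rcases hx with hx | hx
    · have := nonempty_fixSet (F := T₁) ⟨A1, A2, A3, A4, A5, A6, ⟨U1, U2, U3⟩, A8, A9, A10⟩ hx
      rw [← hfix1 x hx] at this
      exact this
    · have := nonempty_fixSet (F := T₂) ⟨B1, B2, B3, B4, B5, B6, ⟨V1, V2, V3⟩, B8, B9, B10⟩ hx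
      rw [← hfix2 x hx] at this
      exact this
  · -- label none off nodes
    intro x hx
    rw [hnodes, Finset.mem_union] at hx
    push_neg at hx
    show (if x ∈ T₁.nodes then T₁.lab x else T₂.lab x) = none
    rw [if_neg hx.1]
    exact B4 x hx.2
  · -- label some on nodes
    intro x hx
    rw [hnodes, Finset.mem_union] at hx
    show (if x ∈ T₁.nodes then T₁.lab x else T₂.lab x) ≠ none
    rcases hx with hx | hx
    · rw [if_pos hx]; exact A5 x hx
    · rw [if_neg (hnd x hx)]; exact B5 x hx
  · -- h0 ⊆ nodes
    show T₁.h0 ∪ T₂.h0 ⊆ (↑(T₁.nodes ∪ T₂.nodes) : Set ℕ)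
    rw [Finset.coe_union]
    exact Set.union_subset_union A6 B6
  · -- ∅ ∉ blocks
    rintro (h | h)
    · exact U1 h
    · exact V1 h
  · -- blocks ⊆ nodes \ h0
    rintro p (hp | hp)
    · intro z hz
      have := hb1sub p hp hz
      constructor
      · rw [hnodes, Finset.coe_union]; exact Or.inl this.1
      · rintro (hc | hc)
        · exact this.2 hc
        · exact hnd z (B6 hc) this.1
    · intro z hz
      have := hb2sub p hp hz
      constructor
      · rw [hnodes, Finset.coe_union]; exact Or.inr this.1
      · rintro (hc | hc)
        · exact hnd z this.1 (A6 hc)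
        · exact this.2 hc
  · -- existence and uniqueness of blocks
    intro x hx
    obtain ⟨hxn, hxh⟩ := hx
    rw [hnodes, Finset.coe_union] at hxn
    have hxh1 : x ∉ T₁.h0 := fun hc => hxh (Or.inl hc)
    have hxh2 : x ∉ T₂.h0 := fun hc => hxh (Or.inr hc)
    rcases hxn with hxn | hxn
    · obtain ⟨p, ⟨hp, hxp⟩, hpu⟩ := U3 x ⟨hxn, hxh1⟩
      refine ⟨p, ⟨Or.inl hp, hxp⟩, ?_⟩
      rintro q ⟨hq | hq, hxq⟩
      · exact hpu q ⟨hq, hxq⟩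
      · exact absurd ((hb2sub q hq hxq).1) (fun hc => hnd x hc hxn)
    · obtain ⟨p, ⟨hp, hxp⟩, hpu⟩ := V3 x ⟨hxn, hxh2⟩
      refine ⟨p, ⟨Or.inr hp, hxp⟩, ?_⟩
      rintro q ⟨hq | hq, hxq⟩
      · exact absurd ((hb1sub q hq hxq).1) (fun hc => hnd x hxn hc)
      · exact hpu q ⟨hq, hxq⟩
  · -- 2.1
    rintro ⟨x, hx | hx⟩
    · obtain ⟨r, hr, hrfix⟩ := A8 ⟨x, hx⟩
      refine ⟨r, Or.inl hr, ?_⟩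
      rw [hpar1 r (A6 hr)]; exact hrfix
    · obtain ⟨r, hr, hrfix⟩ := B8 ⟨x, hx⟩
      refine ⟨r, Or.inr hr, ?_⟩
      rw [hpar2 r (B6 hr)]; exact hrfix
  · -- 2.2
    intro h hh x hx y hy hd
    obtain ⟨hh', hhne⟩ := hh
    rcases hh' with (hb | hb) | hb
    · -- block of T₁
      have hxs := hb1sub h hb hx
      have hys := hb1sub h hb hy
      rw [hdep1 x hxs.1, hdep1 y hys.1] at hd
      have := A9 h (block_mem_hyper ⟨A1, A2, A3, A4, A5, A6, ⟨U1, U2, U3⟩, A8, A9, A10⟩ hb)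
        x hx y hy hd
      rw [hpar1 y hys.1]
      exact this
    · have hxs := hb2sub h hb hx
      have hys := hb2sub h hb hy
      rw [hdep2 x hxs.1, hdep2 y hys.1] at hd
      have := B9 h (block_mem_hyper ⟨B1, B2, B3, B4, B5, B6, ⟨V1, V2, V3⟩, B8, B9, B10⟩ hb)
        x hx y hy hd
      rw [hpar2 y hys.1]
      exact this
    · -- h = h0₁ ∪ h0₂
      rw [Set.mem_singleton_iff] at hb
      subst hb
      rcases hy with hy | hy
      · have hyn : y ∈ T₁.nodes := A6 hy
        have hny : T₁.par y ≠ y := by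
          intro hc
          have : fdepth F y = 0 := by
            rw [hdep1 y hyn]; exact fdepth_eq_zero hc
          omega
        rw [hpar1 y hyn]
        exact Or.inl (hH1 y hy hny)
      · have hyn : y ∈ T₂.nodes := B6 hy
        have hny : T₂.par y ≠ y := by
          intro hc
          have : fdepth F y = 0 := by
            rw [hdep2 y hyn]; exact fdepth_eq_zero hc
          omega
        rw [hpar2 y hyn]
        exact Or.inr (hH2 y hy hny)
  · -- 2.3
    intro h hh x hx y hy hnx hny hdeq hpne
    obtain ⟨hh', hhne⟩ := hh
    rcases hh' with (hb | hb) | hb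
    · have hxs := hb1sub h hb hx
      have hys := hb1sub h hb hy
      rw [hdep1 x hxs.1, hdep1 y hys.1] at hdeq
      rw [hpar1 x hxs.1] at hnx hpne ⊢
      rw [hpar1 y hys.1] at hny hpne ⊢
      exact A10 h (block_mem_hyper ⟨A1, A2, A3, A4, A5, A6, ⟨U1, U2, U3⟩, A8, A9, A10⟩ hb)
        x hx y hy hnx hny hdeq hpne
    · have hxs := hb2sub h hb hx
      have hys := hb2sub h hb hy
      rw [hdep2 x hxs.1, hdep2 y hys.1] at hdeq
      rw [hpar2 x hxs.1] at hnx hpne ⊢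
      rw [hpar2 y hys.1] at hny hpne ⊢
      exact B10 h (block_mem_hyper ⟨B1, B2, B3, B4, B5, B6, ⟨V1, V2, V3⟩, B8, B9, B10⟩ hb)
        x hx y hy hnx hny hdeq hpne
    · rw [Set.mem_singleton_iff] at hb
      subst hb
      constructor
      · rcases hx with hx | hx
        · have hxn := A6 hx
          rw [hpar1 x hxn] at hnx ⊢
          exact Or.inl (hH1 x hx hnx)
        · have hxn := B6 hx
          rw [hpar2 x hxn] at hnx ⊢
          exact Or.inr (hH2 x hx hnx)
      · rcases hy with hy | hy
        · have hyn := A6 hy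
          rw [hpar1 y hyn] at hny ⊢
          exact Or.inl (hH1 y hy hny)
        · have hyn := B6 hy
          rw [hpar2 y hyn] at hny ⊢
          exact Or.inr (hH2 y hy hny)

end Backward

section BackwardRoot

variable {d : ℕ} {T : LForest d} {i : Fin d} {x₀ : ℕ}

lemma froot_par (T : LForest d) (i : Fin d) (x₀ : ℕ) (x : ℕ) :
    (froot T i x₀).par x = if x ∈ T.nodes ∧ T.par x = x then x₀ else T.par x := rfl

lemma froot_par_x₀ (hT : IsLionsForest T) (hx₀ : x₀ ∉ T.nodes) :
    (froot T i x₀).par x₀ = x₀ := by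
  rw [froot_par, if_neg (fun hc => hx₀ hc.1)]
  exact hT.2.1 x₀ hx₀

lemma froot_par_root (hx : x ∈ T.nodes) (hfix : T.par x = x) :
    (froot T i x₀).par x = x₀ := by
  rw [froot_par, if_pos ⟨hx, hfix⟩]

lemma froot_par_nonroot (hfix : T.par x ≠ x) :
    (froot T i x₀).par x = T.par x := by
  rw [froot_par, if_neg (fun hc => hfix hc.2)]

/-- depths increase by one after rooting -/
lemma froot_depth (hT : IsLionsForest T) (hx₀ : x₀ ∉ T.nodes) :
    ∀ x ∈ T.nodes, (fixSet (froot T i x₀) x).Nonempty ∧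
      fdepth (froot T i x₀) x = fdepth T x + 1 := by
  intro x hx
  set G := froot T i x₀ with hG
  generalize hk : fdepth T x = k
  induction k using Nat.strong_induction_on generalizing x with
  | _ k ih =>
    have hne := nonempty_fixSet hT hx
    by_cases hfix : T.par x = x
    · have hGx : G.par x = x₀ := froot_par_root hx hfix
      have hxx : x ≠ x₀ := fun hc => hx₀ (hc ▸ hx)
      have hfx : (fixSet G x).Nonempty := by
        refine ⟨1, ?_⟩
        simp only [fixSet, Set.mem_setOf_eq, Function.iterate_one, hGx]
        exact froot_par_x₀ hT hx₀
      refine ⟨hfx, ?_⟩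
      rw [fdepth_succ hfx (by rw [hGx]; exact fun hc => hxx hc.symm), hGx,
        fdepth_eq_zero (froot_par_x₀ hT hx₀), ← hk, fdepth_eq_zero hfix]
    · have hGx : G.par x = T.par x := froot_par_nonroot hfix
      have hd := fdepth_succ hne hfix
      have hk' : fdepth T (T.par x) = k - 1 ∧ 1 ≤ k := by omega
      obtain ⟨hfp, hdp⟩ := ih (k - 1) (by omega) (T.par x) (hT.1 x hx) hk'.1
      have hfx : (fixSet G x).Nonempty := by
        obtain ⟨n, hn⟩ := hfp
        exact ⟨n + 1, fixSet_succ.mpr (by rwa [hGx])⟩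
      refine ⟨hfx, ?_⟩
      rw [fdepth_succ hfx (hGx ▸ hfix), hGx, hdp]
      omega

lemma lions_froot (hT : IsLionsForest T) (hx₀ : x₀ ∉ T.nodes) :
    IsLionsForest (froot T i x₀) := by
  set G := froot T i x₀ with hG
  have hGnodes : G.nodes = insert x₀ T.nodes := rfl
  have hGh0 : G.h0 = T.h0 ∪ {x₀} := rfl
  have hGblocks : G.blocks = T.blocks := rfl
  obtain ⟨P1, P2, P3, P4, P5, P6, ⟨Q1, Q2, Q3⟩, P8, P9, P10⟩ := hT
  have hT' : IsLionsForest T := ⟨P1, P2, P3, P4, P5, P6, ⟨Q1, Q2, Q3⟩, P8, P9, P10⟩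
  have hdep : ∀ x ∈ T.nodes, fdepth G x = fdepth T x + 1 :=
    fun x hx => (froot_depth hT' hx₀ x hx).2
  have hdx₀ : fdepth G x₀ = 0 := fdepth_eq_zero (froot_par_x₀ hT' hx₀)
  have hnonroot : ∀ x ∈ T.nodes, T.par x ≠ x → fdepth T x ≠ 0 :=
    fun x hx hfix h0 => hfix (par_eq_of_fdepth_eq_zero (nonempty_fixSet hT' hx) h0)
  refine ⟨?_, ?_, ?_, ?_, ?_, ?_, ⟨?_, ?_, ?_⟩, ?_, ?_, ?_⟩
  · -- closure
    intro x hx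
    rw [hGnodes, Finset.mem_insert] at hx ⊢
    rcases hx with hx | hx
    · subst hx; rw [froot_par_x₀ hT' hx₀]; exact Or.inl rfl
    · by_cases hfix : T.par x = x
      · rw [froot_par_root hx hfix]; exact Or.inl rfl
      · rw [froot_par_nonroot hfix]; exact Or.inr (P1 x hx)
  · -- normalisation
    intro x hx
    rw [hGnodes, Finset.mem_insert] at hx
    push_neg at hx
    rw [froot_par, if_neg (fun hc => hx.2 hc.1)]
    exact P2 x hx.2
  · -- termination
    intro x hx
    rw [hGnodes, Finset.mem_insert] at hx
    rcases hx with hx | hx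
    · subst hx; exact ⟨0, by simpa [fixSet] using froot_par_x₀ hT' hx₀⟩
    · exact (froot_depth hT' hx₀ x hx).1
  · -- labels off nodes
    intro x hx
    rw [hGnodes, Finset.mem_insert] at hx
    push_neg at hx
    show Function.update T.lab x₀ (some i) x = none
    rw [Function.update_of_ne hx.1]
    exact P4 x hx.2
  · -- labels on nodes
    intro x hx
    rw [hGnodes, Finset.mem_insert] at hx
    show Function.update T.lab x₀ (some i) x ≠ none
    rcases hx with hx | hx
    · subst hx; simp
    · rw [Function.update_of_ne (fun hc => hx₀ (by rw [← hc]; exact hx))]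
      exact P5 x hx
  · -- h0 ⊆ nodes
    rw [hGh0, hGnodes]
    intro z hz
    rcases hz with hz | hz
    · simp only [Finset.coe_insert, Set.mem_insert_iff]
      exact Or.inr (P6 hz)
    · simp only [Set.mem_singleton_iff] at hz
      subst hz
      simp
  · -- ∅ ∉ blocks
    rw [hGblocks]; exact Q1
  · -- blocks ⊆ nodes \ h0
    rw [hGblocks]
    intro p hp z hz
    have := Q2 p hp hz
    constructor
    · rw [hGnodes]
      simp only [Finset.coe_insert, Set.mem_insert_iff]
      exact Or.inr this.1
    · rw [hGh0]
      rintro (hc | hc)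
      · exact this.2 hc
      · simp only [Set.mem_singleton_iff] at hc
        exact hx₀ (hc ▸ this.1)
  · -- existence and uniqueness
    intro x hx
    obtain ⟨hxn, hxh⟩ := hx
    rw [hGnodes] at hxn
    rw [hGh0] at hxh
    simp only [Finset.coe_insert, Set.mem_insert_iff] at hxn
    have hxx₀ : x ≠ x₀ := fun hc => hxh (Or.inr (by simp [hc]))
    have hxn' : x ∈ (↑T.nodes : Set ℕ) := by
      rcases hxn with hc | hc
      · exact absurd hc hxx₀
      · exact hc
    have hxh' : x ∉ T.h0 := fun hc => hxh (Or.inl hc)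
    obtain ⟨p, ⟨hp, hxp⟩, hpu⟩ := Q3 x ⟨hxn', hxh'⟩
    exact ⟨p, ⟨hp, hxp⟩, fun q hq => hpu q hq⟩
  · -- 2.1
    intro _
    refine ⟨x₀, Or.inr rfl, froot_par_x₀ hT' hx₀⟩
  · -- 2.2
    intro h hh x hx y hy hd
    obtain ⟨hh', hhne⟩ := hh
    rcases hh' with hb | hb
    · -- a block
      rw [hGblocks] at hb
      have hxs := Q2 _ hb hx
      have hys := Q2 _ hb hy
      rw [hdep x hxs.1, hdep y hys.1] at hd
      have hdy : 0 < fdepth T y := by omega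
      have hny : T.par y ≠ y := fun hc => by simp [fdepth_eq_zero hc] at hdy
      rw [froot_par_nonroot hny]
      exact P9 h (block_mem_hyper hT' hb) x hx y hy (by omega)
    · -- the tagged hyperedge
      rw [Set.mem_singleton_iff] at hb
      subst hb
      have hyx₀ : y ≠ x₀ := by
        intro hc
        subst hc
        rw [hdx₀] at hd
        omega
      have hy' : y ∈ T.h0 := by
        rcases hy with hy | hy
        · exact hy
        · exact absurd (Set.mem_singleton_iff.mp hy) hyx₀
      have hyn : y ∈ T.nodes := P6 hy'
      by_cases hfix : T.par y = y
      · rw [froot_par_root hyn hfix]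
        exact Or.inr rfl
      · rw [froot_par_nonroot hfix]
        exact Or.inl (h0_par_mem hT' hy' hfix)
  · -- 2.3
    intro h hh x hx y hy hnx hny hdeq hpne
    obtain ⟨hh', hhne⟩ := hh
    rcases hh' with hb | hb
    · rw [hGblocks] at hb
      have hxs := Q2 _ hb hx
      have hys := Q2 _ hb hy
      by_cases hfx : T.par x = x <;> by_cases hfy : T.par y = y
      · exact absurd (by rw [froot_par_root hxs.1 hfx, froot_par_root hys.1 hfy]) hpne
      · exfalso
        have h1 : fdepth G x = fdepth T x + 1 := hdep x hxs.1
        have h2 : fdepth G y = fdepth T y + 1 := hdep y hys.1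
        have h3 : fdepth T x = 0 := fdepth_eq_zero hfx
        have h4 : fdepth T y ≠ 0 := hnonroot y hys.1 hfy
        omega
      · exfalso
        have h1 : fdepth G x = fdepth T x + 1 := hdep x hxs.1
        have h2 : fdepth G y = fdepth T y + 1 := hdep y hys.1
        have h3 : fdepth T y = 0 := fdepth_eq_zero hfy
        have h4 : fdepth T x ≠ 0 := hnonroot x hxs.1 hfx
        omega
      · rw [froot_par_nonroot hfx] at hpne ⊢
        rw [froot_par_nonroot hfy] at hpne ⊢
        have hdeq' : fdepth T x = fdepth T y := by
          have h1 : fdepth G x = fdepth T x + 1 := hdep x hxs.1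
          have h2 : fdepth G y = fdepth T y + 1 := hdep y hys.1
          omega
        exact P10 h (block_mem_hyper hT' hb) x hx y hy hfx hfy hdeq' hpne
    · rw [Set.mem_singleton_iff] at hb
      subst hb
      have hmem : ∀ z ∈ T.h0 ∪ {x₀}, G.par z ≠ z → G.par z ∈ T.h0 ∪ {x₀} := by
        intro z hz hnz
        have hzx₀ : z ≠ x₀ := by
          intro hc
          subst hc
          exact hnz (froot_par_x₀ hT' hx₀)
        have hz' : z ∈ T.h0 := by
          rcases hz with hz | hz
          · exact hz
          · exact absurd (Set.mem_singleton_iff.mp hz) hzx₀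
        by_cases hfix : T.par z = z
        · rw [froot_par_root (P6 hz') hfix]
          exact Or.inr rfl
        · rw [froot_par_nonroot hfix]
          exact Or.inl (h0_par_mem hT' hz' hfix)
      exact ⟨hmem x hx hnx, hmem y hy hny⟩

end BackwardRoot

/-- Backward direction: generated forests are Lions forests. -/
lemma gen_isLionsForest {d : ℕ} {T : LForest d} (h : Gen d T) : IsLionsForest T := by
  induction h with
  | one => exact lions_one
  | prod _ _ hdisj ih1 ih2 => exact lions_fprod ih1 ih2 hdisj
  | dec _ ih => exact lions_fdec ih
  | root i x₀ _ hx₀ ih => exact lions_froot ih hx₀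

section ForwardBasics

variable {d : ℕ}

lemma LForest.ext' {F G : LForest d} (h1 : F.nodes = G.nodes) (h2 : F.par = G.par)
    (h3 : F.h0 = G.h0) (h4 : F.blocks = G.blocks) (h5 : F.lab = G.lab) : F = G := by
  cases F; cases G; simp_all

lemma rt_par_eq {F : LForest d} (hT : IsLionsForest F) {z : ℕ} (hz : z ∈ F.nodes) :
    rt F (F.par z) = rt F z := by
  by_cases hfix : F.par z = z
  · rw [hfix]
  · exact rt_par (nonempty_fixSet hT hz) hfix

lemma forest_eq_one {T : LForest d} (hT : IsLionsForest T) (h : T.nodes = ∅) :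
    T = (⟨∅, id, ∅, ∅, fun _ => none⟩ : LForest d) := by
  obtain ⟨P1, P2, P3, P4, P5, P6, ⟨Q1, Q2, Q3⟩, P8, P9, P10⟩ := hT
  have hh0 : T.h0 = ∅ := by
    rw [h] at P6
    simpa using P6
  have hb : T.blocks = ∅ := by
    ext b
    simp only [Set.mem_empty_iff_false, iff_false]
    intro hbm
    have hsub := Q2 b hbm
    rw [h, hh0] at hsub
    simp only [Finset.coe_empty, Set.empty_diff, Set.subset_empty_iff] at hsub
    exact Q1 (hsub ▸ hbm)
  refine LForest.ext' h ?_ hh0 hb ?_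
  · funext x
    exact P2 x (by simp [h])
  · funext x
    exact P4 x (by simp [h])

/-- un-decoupling: a Lions forest with empty tagged hyperedge is a decoupling -/
lemma exists_undec {T : LForest d} (hT : IsLionsForest T) (hne : T.nodes.Nonempty)
    (hh0 : T.h0 = ∅) :
    ∃ T' : LForest d, IsLionsForest T' ∧ T'.nodes = T.nodes ∧ T'.h0 ≠ ∅ ∧ T = fdec T' := by
  obtain ⟨P1, P2, P3, P4, P5, P6, ⟨Q1, Q2, Q3⟩, P8, P9, P10⟩ := hT
  have hT' : IsLionsForest T := ⟨P1, P2, P3, P4, P5, P6, ⟨Q1, Q2, Q3⟩, P8, P9, P10⟩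
  obtain ⟨x, hx⟩ := hne
  set r := rt T x with hr
  have hrn : r ∈ T.nodes := rt_mem hT' hx
  have hrfix : T.par r = r := rt_fix (nonempty_fixSet hT' hx)
  have hrmem : r ∈ (↑T.nodes : Set ℕ) \ T.h0 := ⟨by simpa using hrn, by simp [hh0]⟩
  obtain ⟨h, ⟨hhm, hrh⟩, hhu⟩ := Q3 r hrmem
  have hhnee : h ≠ ∅ := fun hc => Q1 (hc ▸ hhm)
  -- blocks other than h are disjoint from h
  have hdisj : ∀ p ∈ T.blocks, p ≠ h → ∀ z ∈ p, z ∉ h := by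
    intro p hp hpne z hzp hzh
    have hz : z ∈ (↑T.nodes : Set ℕ) \ T.h0 := Q2 p hp hzp
    obtain ⟨u, _, huu⟩ := Q3 z hz
    exact hpne ((huu p ⟨hp, hzp⟩).trans (huu h ⟨hhm, hzh⟩).symm)
  refine ⟨⟨T.nodes, T.par, h, T.blocks \ {h}, T.lab⟩, ?_, rfl, hhnee, ?_⟩
  · -- is a Lions forest
    set T' : LForest d := ⟨T.nodes, T.par, h, T.blocks \ {h}, T.lab⟩ with hT'def
    have hhyper : hyper T' = hyper T := by
      ext b
      simp only [hyper, hT'def, Set.mem_diff, Set.mem_union, Set.mem_singleton_iff, hh0]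
      constructor
      · rintro ⟨⟨hb, _⟩ | hb, hbne⟩
        · exact ⟨Or.inl hb, hbne⟩
        · exact ⟨Or.inl (hb ▸ hhm), hbne⟩
      · rintro ⟨hb | hb, hbne⟩
        · by_cases hbh : b = h
          · exact ⟨Or.inr hbh, hbne⟩
          · exact ⟨Or.inl ⟨hb, hbh⟩, hbne⟩
        · exact absurd hb hbne
    refine ⟨P1, P2, P3, P4, P5, ?_, ⟨?_, ?_, ?_⟩, ?_, ?_, ?_⟩
    · -- h ⊆ nodes
      intro z hz
      exact (Q2 h hhm hz).1
    · -- ∅ ∉ blocks'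
      rintro ⟨hc, _⟩
      exact Q1 hc
    · -- blocks' ⊆ nodes \ h
      rintro p ⟨hp, hpne⟩ z hz
      refine ⟨(Q2 p hp hz).1, ?_⟩
      exact hdisj p hp (by simpa using hpne) z hz
    · -- existence and uniqueness
      rintro z ⟨hzn, hzh⟩
      obtain ⟨p, ⟨hp, hzp⟩, hpu⟩ := Q3 z ⟨hzn, by simp [hh0]⟩
      have hpneh : p ≠ h := fun hc => hzh (show z ∈ h from hc ▸ hzp)
      refine ⟨p, ⟨⟨hp, by simpa using hpneh⟩, hzp⟩, ?_⟩
      rintro q ⟨⟨hq, _⟩, hzq⟩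
      exact hpu q ⟨hq, hzq⟩
    · -- 2.1
      intro _
      exact ⟨r, hrh, hrfix⟩
    · -- 2.2
      rw [hhyper]
      exact P9
    · -- 2.3
      rw [hhyper]
      exact P10
  · -- T = fdec T'
    refine LForest.ext' rfl rfl (by simpa [fdec] using hh0) ?_ rfl
    show T.blocks = ((T.blocks \ {h}) ∪ {h}) \ {(∅ : Set ℕ)}
    ext b
    simp only [Set.mem_diff, Set.mem_union, Set.mem_singleton_iff]
    constructor
    · intro hb
      refine ⟨?_, fun hc => Q1 (hc ▸ hb)⟩
      by_cases hbh : b = h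
      · exact Or.inr hbh
      · exact Or.inl ⟨hb, hbh⟩
    · rintro ⟨⟨hb, _⟩ | hb, _⟩
      · exact hb
      · exact hb ▸ hhm

end ForwardBasics

section ForwardSplit

variable {d : ℕ}

/-- restriction of a Lions forest to a union of trees is again a Lions forest -/
lemma lions_restrict {T Tr : LForest d} (hT : IsLionsForest T) (R : ℕ → Prop)
    (hstab : ∀ z ∈ T.nodes, R z → R (T.par z))
    (hdich : ∀ b ∈ T.blocks, ∀ x ∈ b, R x → ∀ z ∈ b, R z)
    (hroot : (T.h0 ∩ {z | R z}).Nonempty → ∃ z, (z ∈ T.h0 ∧ R z) ∧ T.par z = z)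
    (hn : ∀ z, z ∈ Tr.nodes ↔ z ∈ T.nodes ∧ R z)
    (hp1 : ∀ z ∈ T.nodes, R z → Tr.par z = T.par z)
    (hp2 : ∀ z, ¬ (z ∈ T.nodes ∧ R z) → Tr.par z = z)
    (hh : Tr.h0 = T.h0 ∩ {z | R z})
    (hb : Tr.blocks = {b ∈ T.blocks | ∀ z ∈ b, R z})
    (hl1 : ∀ z ∈ T.nodes, R z → Tr.lab z = T.lab z)
    (hl2 : ∀ z, ¬ (z ∈ T.nodes ∧ R z) → Tr.lab z = none) :
    IsLionsForest Tr := by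
  obtain ⟨P1, P2, P3, P4, P5, P6, ⟨Q1, Q2, Q3⟩, P8, P9, P10⟩ := hT
  have hT' : IsLionsForest T := ⟨P1, P2, P3, P4, P5, P6, ⟨Q1, Q2, Q3⟩, P8, P9, P10⟩
  have memA : ∀ z, z ∈ Tr.nodes ↔ z ∈ T.nodes ∧ R z := hn
  have parEq : ∀ z ∈ T.nodes, R z → Tr.par z = T.par z := hp1
  have hcong : ∀ y ∈ (↑Tr.nodes : Set ℕ), Tr.par y = T.par y ∧ Tr.par y ∈ (↑Tr.nodes : Set ℕ) := by
    intro y hy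
    have hy' : y ∈ Tr.nodes := hy
    obtain ⟨hyn, hyR⟩ := (memA y).mp hy'
    have h1 : Tr.par y = T.par y := parEq y hyn hyR
    refine ⟨h1, ?_⟩
    rw [h1]
    have : T.par y ∈ Tr.nodes := (memA _).mpr ⟨P1 y hyn, hstab y hyn hyR⟩
    simpa using this
  have hdep : ∀ z ∈ Tr.nodes, fdepth Tr z = fdepth T z :=
    fun z hz => fdepth_congr hcong (by simpa using hz)
  have hfix : ∀ z ∈ Tr.nodes, fixSet Tr z = fixSet T z :=
    fun z hz => fixSet_congr hcong (by simpa using hz)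
  have hsub : ∀ b ∈ Tr.blocks, b ⊆ (↑Tr.nodes : Set ℕ) \ Tr.h0 := by
    rw [hb, hh]
    rintro b ⟨hbm, hbR⟩ z hz
    have h1 := Q2 b hbm hz
    constructor
    · have : z ∈ Tr.nodes := (memA z).mpr ⟨h1.1, hbR z hz⟩
      simpa using this
    · rintro ⟨hzh, _⟩
      exact h1.2 hzh
  refine ⟨?_, ?_, ?_, ?_, ?_, ?_, ⟨?_, ?_, ?_⟩, ?_, ?_, ?_⟩
  · -- closure
    intro z hz
    obtain ⟨hzn, hzR⟩ := (memA z).mp hz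
    rw [parEq z hzn hzR]
    exact (memA _).mpr ⟨P1 z hzn, hstab z hzn hzR⟩
  · -- normalisation
    intro z hz
    rw [memA z] at hz
    exact hp2 z hz
  · -- termination
    intro z hz
    have := nonempty_fixSet hT' ((memA z).mp hz).1
    rw [← hfix z hz] at this
    exact this
  · -- labels off nodes
    intro z hz
    rw [memA z] at hz
    exact hl2 z hz
  · -- labels on nodes
    intro z hz
    obtain ⟨hzn, hzR⟩ := (memA z).mp hz
    rw [hl1 z hzn hzR]
    exact P5 z hzn
  · -- h0 ⊆ nodes
    rw [hh]
    rintro z ⟨hzh, hzR⟩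
    have : z ∈ Tr.nodes := (memA z).mpr ⟨P6 hzh, hzR⟩
    simpa using this
  · -- ∅ ∉ blocks
    rw [hb]
    rintro ⟨hc, _⟩
    exact Q1 hc
  · -- blocks ⊆ nodes \ h0
    exact hsub
  · -- existence and uniqueness
    rintro z ⟨hzn, hzh⟩
    have hzn' : z ∈ Tr.nodes := hzn
    rw [hh] at hzh
    obtain ⟨hzm, hzR⟩ := (memA z).mp hzn'
    have hzh' : z ∉ T.h0 := fun hc => hzh ⟨hc, hzR⟩
    obtain ⟨b, ⟨hbm, hzb⟩, hbu⟩ := Q3 z ⟨by simpa using hzm, hzh'⟩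
    rw [hb]
    refine ⟨b, ⟨⟨hbm, hdich b hbm z hzb hzR⟩, hzb⟩, ?_⟩
    rintro q ⟨⟨hq, _⟩, hzq⟩
    exact hbu q ⟨hq, hzq⟩
  · -- 2.1
    rw [hh]
    intro hne
    obtain ⟨z, ⟨hz1, hz2⟩, hz3⟩ := hroot hne
    refine ⟨z, ⟨hz1, hz2⟩, ?_⟩
    rw [parEq z (P6 hz1) hz2]
    exact hz3
  · -- 2.2
    intro h hhm x hx y hy hdlt
    obtain ⟨hh', hhne⟩ := hhm
    rw [hb] at hh'
    rw [hh] at hh'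
    rcases hh' with hcase | hcase
    · obtain ⟨hbm, hbR⟩ := hcase
      have hxA : x ∈ Tr.nodes := (memA x).mpr ⟨(Q2 _ hbm hx).1, hbR x hx⟩
      have hyA : y ∈ Tr.nodes := (memA y).mpr ⟨(Q2 _ hbm hy).1, hbR y hy⟩
      rw [hdep x hxA, hdep y hyA] at hdlt
      rw [parEq y ((memA y).mp hyA).1 ((memA y).mp hyA).2]
      exact P9 h (block_mem_hyper hT' hbm) x hx y hy hdlt
    · rw [Set.mem_singleton_iff] at hcase
      subst hcase
      obtain ⟨hxh, hxR⟩ := hx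
      obtain ⟨hyh, hyR⟩ := hy
      have hxA : x ∈ Tr.nodes := (memA x).mpr ⟨P6 hxh, hxR⟩
      have hyA : y ∈ Tr.nodes := (memA y).mpr ⟨P6 hyh, hyR⟩
      rw [hdep x hxA, hdep y hyA] at hdlt
      have := P9 T.h0 (h0_mem_hyper ⟨x, hxh⟩) x hxh y hyh hdlt
      rw [parEq y (P6 hyh) hyR]
      exact ⟨this, hstab y (P6 hyh) hyR⟩
  · -- 2.3
    intro h hhm x hx y hy hnx hny hdeq hpne
    obtain ⟨hh', hhne⟩ := hhm
    rw [hb] at hh'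
    rw [hh] at hh'
    rcases hh' with hcase | hcase
    · obtain ⟨hbm, hbR⟩ := hcase
      have hxA : x ∈ Tr.nodes := (memA x).mpr ⟨(Q2 _ hbm hx).1, hbR x hx⟩
      have hyA : y ∈ Tr.nodes := (memA y).mpr ⟨(Q2 _ hbm hy).1, hbR y hy⟩
      have hex : Tr.par x = T.par x := parEq x ((memA x).mp hxA).1 ((memA x).mp hxA).2
      have hey : Tr.par y = T.par y := parEq y ((memA y).mp hyA).1 ((memA y).mp hyA).2
      rw [hdep x hxA, hdep y hyA] at hdeq
      rw [hex] at hnx hpne ⊢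
      rw [hey] at hny hpne ⊢
      exact P10 h (block_mem_hyper hT' hbm) x hx y hy hnx hny hdeq hpne
    · rw [Set.mem_singleton_iff] at hcase
      subst hcase
      obtain ⟨hxh, hxR⟩ := hx
      obtain ⟨hyh, hyR⟩ := hy
      have hxA : x ∈ Tr.nodes := (memA x).mpr ⟨P6 hxh, hxR⟩
      have hyA : y ∈ Tr.nodes := (memA y).mpr ⟨P6 hyh, hyR⟩
      have hex : Tr.par x = T.par x := parEq x (P6 hxh) hxR
      have hey : Tr.par y = T.par y := parEq y (P6 hyh) hyR
      rw [hdep x hxA, hdep y hyA] at hdeq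
      rw [hex] at hnx hpne ⊢
      rw [hey] at hny hpne ⊢
      obtain ⟨c1, c2⟩ := P10 T.h0 (h0_mem_hyper ⟨x, hxh⟩) x hxh y hyh hnx hny hdeq hpne
      exact ⟨⟨c1, hstab x (P6 hxh) hxR⟩, ⟨c2, hstab y (P6 hyh) hyR⟩⟩

/-- splitting off the tree(s) of a tagged root from the rest -/
lemma exists_split {T : LForest d} (hT : IsLionsForest T) {r₀ : ℕ} (hr₀ : r₀ ∈ T.h0)
    (hr₀fix : T.par r₀ = r₀) (hex : ∃ x ∈ T.nodes, rt T x ≠ r₀) :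
    ∃ T₁ T₂ : LForest d, IsLionsForest T₁ ∧ IsLionsForest T₂ ∧
      Disjoint T₁.nodes T₂.nodes ∧ T = fprod T₁ T₂ ∧
      T₁.nodes.Nonempty ∧ T₂.nodes.Nonempty ∧ T₁.nodes ∪ T₂.nodes = T.nodes := by
  obtain ⟨P1, P2, P3, P4, P5, P6, ⟨Q1, Q2, Q3⟩, P8, P9, P10⟩ := hT
  have hT' : IsLionsForest T := ⟨P1, P2, P3, P4, P5, P6, ⟨Q1, Q2, Q3⟩, P8, P9, P10⟩
  set R : ℕ → Prop := fun z => rt T z = r₀ with hR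
  have hr₀n : r₀ ∈ T.nodes := P6 hr₀
  have hstab1 : ∀ z ∈ T.nodes, R z → R (T.par z) := by
    intro z hz hRz
    show rt T (T.par z) = r₀
    rw [rt_par_eq hT' hz]
    exact hRz
  have hstab2 : ∀ z ∈ T.nodes, ¬ R z → ¬ R (T.par z) := by
    intro z hz hRz hc
    apply hRz
    show rt T z = r₀
    rw [← rt_par_eq hT' hz]
    exact hc
  have hdich1 : ∀ b ∈ T.blocks, ∀ x ∈ b, R x → ∀ z ∈ b, R z := by
    intro b hb x hx hRx z hz
    have := lemD hT' hb hx (by rw [show rt T x = r₀ from hRx]; exact hr₀) z hz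
    show rt T z = r₀
    rw [this]; exact hRx
  have hdich2 : ∀ b ∈ T.blocks, ∀ x ∈ b, ¬ R x → ∀ z ∈ b, ¬ R z := by
    intro b hb x hx hRx z hz hRz
    have := lemD hT' hb hz (by rw [show rt T z = r₀ from hRz]; exact hr₀) x hx
    exact hRx (this.trans hRz)
  have hroot1 : (T.h0 ∩ {z | R z}).Nonempty → ∃ z, (z ∈ T.h0 ∧ R z) ∧ T.par z = z :=
    fun _ => ⟨r₀, ⟨hr₀, rt_of_fix hr₀fix⟩, hr₀fix⟩
  have hroot2 : (T.h0 ∩ {z | ¬ R z}).Nonempty → ∃ z, (z ∈ T.h0 ∧ ¬ R z) ∧ T.par z = z := by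
    rintro ⟨y, hy, hyR⟩
    have hρ : rt T y ∈ T.h0 := lemA hT' (h0_mem_hyper ⟨r₀, hr₀⟩) hr₀ hr₀fix y hy
    have hρfix : T.par (rt T y) = rt T y := rt_fix (nonempty_fixSet hT' (P6 hy))
    refine ⟨rt T y, ⟨hρ, ?_⟩, hρfix⟩
    show ¬ rt T (rt T y) = r₀
    rw [rt_of_fix hρfix]
    exact hyR
  obtain ⟨T₁, hT₁⟩ : ∃ T₁ : LForest d, T₁ = ⟨T.nodes.filter R,
      fun z => if z ∈ T.nodes ∧ R z then T.par z else z,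
      T.h0 ∩ {z | R z}, {b ∈ T.blocks | ∀ z ∈ b, R z},
      fun z => if z ∈ T.nodes ∧ R z then T.lab z else none⟩ := ⟨_, rfl⟩
  obtain ⟨T₂, hT₂⟩ : ∃ T₂ : LForest d, T₂ = ⟨T.nodes.filter (fun z => ¬ R z),
      fun z => if z ∈ T.nodes ∧ ¬ R z then T.par z else z,
      T.h0 ∩ {z | ¬ R z}, {b ∈ T.blocks | ∀ z ∈ b, ¬ R z},
      fun z => if z ∈ T.nodes ∧ ¬ R z then T.lab z else none⟩ := ⟨_, rfl⟩
  have hmem1 : ∀ z, z ∈ T₁.nodes ↔ z ∈ T.nodes ∧ R z := by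
    intro z; rw [hT₁]; exact Finset.mem_filter
  have hmem2 : ∀ z, z ∈ T₂.nodes ↔ z ∈ T.nodes ∧ ¬ R z := by
    intro z; rw [hT₂]; exact Finset.mem_filter
  have hpar1p : ∀ z ∈ T.nodes, R z → T₁.par z = T.par z := by
    intro z hz hRz; rw [hT₁]; exact if_pos ⟨hz, hRz⟩
  have hpar1n : ∀ z, ¬ (z ∈ T.nodes ∧ R z) → T₁.par z = z := by
    intro z hz; rw [hT₁]; exact if_neg hz
  have hpar2p : ∀ z ∈ T.nodes, ¬ R z → T₂.par z = T.par z := by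
    intro z hz hRz; rw [hT₂]; exact if_pos ⟨hz, hRz⟩
  have hpar2n : ∀ z, ¬ (z ∈ T.nodes ∧ ¬ R z) → T₂.par z = z := by
    intro z hz; rw [hT₂]; exact if_neg hz
  have hlab1p : ∀ z ∈ T.nodes, R z → T₁.lab z = T.lab z := by
    intro z hz hRz; rw [hT₁]; exact if_pos ⟨hz, hRz⟩
  have hlab1n : ∀ z, ¬ (z ∈ T.nodes ∧ R z) → T₁.lab z = none := by
    intro z hz; rw [hT₁]; exact if_neg hz
  have hlab2p : ∀ z ∈ T.nodes, ¬ R z → T₂.lab z = T.lab z := by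
    intro z hz hRz; rw [hT₂]; exact if_pos ⟨hz, hRz⟩
  have hlab2n : ∀ z, ¬ (z ∈ T.nodes ∧ ¬ R z) → T₂.lab z = none := by
    intro z hz; rw [hT₂]; exact if_neg hz
  have hh01 : T₁.h0 = T.h0 ∩ {z | R z} := by rw [hT₁]
  have hh02 : T₂.h0 = T.h0 ∩ {z | ¬ R z} := by rw [hT₂]
  have hbl1 : T₁.blocks = {b ∈ T.blocks | ∀ z ∈ b, R z} := by rw [hT₁]
  have hbl2 : T₂.blocks = {b ∈ T.blocks | ∀ z ∈ b, ¬ R z} := by rw [hT₂]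
  have h1 : IsLionsForest T₁ :=
    lions_restrict hT' R hstab1 hdich1 hroot1 hmem1 hpar1p hpar1n hh01 hbl1 hlab1p hlab1n
  have h2 : IsLionsForest T₂ :=
    lions_restrict hT' (fun z => ¬ R z) hstab2 hdich2 hroot2 hmem2 hpar2p hpar2n hh02 hbl2
      hlab2p hlab2n
  have hdisj : Disjoint T₁.nodes T₂.nodes := by
    rw [Finset.disjoint_left]
    intro a ha hb
    exact ((hmem2 a).mp hb).2 ((hmem1 a).mp ha).2
  have hunion : T₁.nodes ∪ T₂.nodes = T.nodes := by
    ext z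
    simp only [Finset.mem_union, hmem1 z, hmem2 z]
    tauto
  refine ⟨T₁, T₂, h1, h2, hdisj, ?_, ⟨r₀, ?_⟩, ?_, hunion⟩
  · -- T = fprod T₁ T₂
    refine LForest.ext' hunion.symm ?_ ?_ ?_ ?_
    · funext z
      show T.par z = if z ∈ T₁.nodes then T₁.par z else T₂.par z
      by_cases hz1 : z ∈ T₁.nodes
      · rw [if_pos hz1]
        obtain ⟨hzn, hzR⟩ := (hmem1 z).mp hz1
        rw [hpar1p z hzn hzR]
      · rw [if_neg hz1]
        by_cases hzn : z ∈ T.nodes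
        · have hzR : ¬ R z := fun hc => hz1 ((hmem1 z).mpr ⟨hzn, hc⟩)
          rw [hpar2p z hzn hzR]
        · rw [hpar2n z (fun hc => hzn hc.1)]
          exact P2 z hzn
    · show T.h0 = T₁.h0 ∪ T₂.h0
      rw [hh01, hh02]
      show T.h0 = T.h0 ∩ {z | R z} ∪ T.h0 ∩ {z | ¬ R z}
      ext z
      simp only [Set.mem_union, Set.mem_inter_iff, Set.mem_setOf_eq]
      tauto
    · show T.blocks = T₁.blocks ∪ T₂.blocks
      rw [hbl1, hbl2]
      show T.blocks = {b ∈ T.blocks | ∀ z ∈ b, R z} ∪ {b ∈ T.blocks | ∀ z ∈ b, ¬ R z}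
      ext b
      simp only [Set.mem_union, Set.mem_setOf_eq]
      constructor
      · intro hb
        by_cases hq : ∀ z ∈ b, R z
        · exact Or.inl ⟨hb, hq⟩
        · push_neg at hq
          obtain ⟨w, hw, hwR⟩ := hq
          exact Or.inr ⟨hb, hdich2 b hb w hw hwR⟩
      · rintro (⟨hb, _⟩ | ⟨hb, _⟩) <;> exact hb
    · funext z
      show T.lab z = if z ∈ T₁.nodes then T₁.lab z else T₂.lab z
      by_cases hz1 : z ∈ T₁.nodes
      · rw [if_pos hz1]
        obtain ⟨hzn, hzR⟩ := (hmem1 z).mp hz1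
        rw [hlab1p z hzn hzR]
      · rw [if_neg hz1]
        by_cases hzn : z ∈ T.nodes
        · have hzR : ¬ R z := fun hc => hz1 ((hmem1 z).mpr ⟨hzn, hc⟩)
          rw [hlab2p z hzn hzR]
        · rw [hlab2n z (fun hc => hzn hc.1)]
          exact P4 z hzn
  · -- r₀ ∈ T₁.nodes
    exact (hmem1 r₀).mpr ⟨hr₀n, rt_of_fix hr₀fix⟩
  · -- T₂ nonempty
    obtain ⟨x, hx, hxR⟩ := hex
    exact ⟨x, (hmem2 x).mpr ⟨hx, hxR⟩⟩

end ForwardSplit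

section ForwardUnroot

variable {d : ℕ}

/-- un-rooting: a single-tree Lions forest with tagged root is a rooting -/
lemma exists_unroot {T : LForest d} (hT : IsLionsForest T) {r₀ : ℕ} (hr₀ : r₀ ∈ T.h0)
    (hr₀fix : T.par r₀ = r₀) (hall : ∀ x ∈ T.nodes, rt T x = r₀) :
    ∃ (T' : LForest d) (i : Fin d), IsLionsForest T' ∧ T'.nodes = T.nodes.erase r₀ ∧
      T = froot T' i r₀ := by
  obtain ⟨P1, P2, P3, P4, P5, P6, ⟨Q1, Q2, Q3⟩, P8, P9, P10⟩ := hT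
  have hT' : IsLionsForest T := ⟨P1, P2, P3, P4, P5, P6, ⟨Q1, Q2, Q3⟩, P8, P9, P10⟩
  have hr₀n : r₀ ∈ T.nodes := P6 hr₀
  obtain ⟨i, hi⟩ : ∃ i, T.lab r₀ = some i := Option.ne_none_iff_exists'.mp (P5 r₀ hr₀n)
  -- the un-rooted forest
  obtain ⟨T', hT'def⟩ : ∃ T' : LForest d, T' = ⟨T.nodes.erase r₀,
      fun z => if z = r₀ then r₀ else if T.par z = r₀ then z else T.par z,
      T.h0 \ {r₀}, T.blocks,
      fun z => if z = r₀ then none else T.lab z⟩ := ⟨_, rfl⟩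
  have hmem : ∀ z, z ∈ T'.nodes ↔ z ∈ T.nodes ∧ z ≠ r₀ := by
    intro z; rw [hT'def]
    show z ∈ T.nodes.erase r₀ ↔ _
    rw [Finset.mem_erase]; tauto
  have hparr₀ : T'.par r₀ = r₀ := by rw [hT'def]; exact if_pos rfl
  have hpar : ∀ z, z ≠ r₀ → T'.par z = if T.par z = r₀ then z else T.par z := by
    intro z hz; rw [hT'def]; exact if_neg hz
  have hparc : ∀ z, z ≠ r₀ → T.par z = r₀ → T'.par z = z := by
    intro z hz hc; rw [hpar z hz]; exact if_pos hc
  have hparn : ∀ z, z ≠ r₀ → T.par z ≠ r₀ → T'.par z = T.par z := by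
    intro z hz hc; rw [hpar z hz]; exact if_neg hc
  have hlab : ∀ z, z ≠ r₀ → T'.lab z = T.lab z := by
    intro z hz; rw [hT'def]; exact if_neg hz
  have hlabr₀ : T'.lab r₀ = none := by rw [hT'def]; exact if_pos rfl
  have hh0' : T'.h0 = T.h0 \ {r₀} := by rw [hT'def]
  have hbl' : T'.blocks = T.blocks := by rw [hT'def]
  -- nodes other than r₀ are non-roots of T
  have hnr : ∀ z ∈ T.nodes, z ≠ r₀ → T.par z ≠ z := by
    intro z hz hne hc
    exact hne (by rw [← hall z hz, rt_of_fix hc])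
  have hdpos : ∀ z ∈ T.nodes, z ≠ r₀ → 0 < fdepth T z :=
    fun z hz hne => fdepth_pos (nonempty_fixSet hT' hz) (hnr z hz hne)
  have hdr₀ : fdepth T r₀ = 0 := fdepth_eq_zero hr₀fix
  -- depth-one characterisation
  have hdep1 : ∀ z ∈ T.nodes, z ≠ r₀ → (T.par z = r₀ ↔ fdepth T z = 1) := by
    intro z hz hne
    constructor
    · intro hc
      rw [fdepth_succ (nonempty_fixSet hT' hz) (hnr z hz hne), hc, hdr₀]
    · intro hc
      have : rt T z = T.par^[1] z := by rw [rt, hc]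
      rw [Function.iterate_one] at this
      rw [← this, hall z hz]
  -- the depth lemma
  have hdepth : ∀ z ∈ T.nodes, z ≠ r₀ →
      (fixSet T' z).Nonempty ∧ fdepth T' z + 1 = fdepth T z := by
    intro z hz hne
    generalize hk : fdepth T z = k
    induction k using Nat.strong_induction_on generalizing z with
    | _ k ih =>
      have hkpos : 0 < k := hk ▸ hdpos z hz hne
      by_cases hc : T.par z = r₀
      · have h1 : k = 1 := by rw [← hk]; exact ((hdep1 z hz hne).mp hc)
        have hfixz : T'.par z = z := hparc z hne hc
        exact ⟨⟨0, fixSet_zero.mpr hfixz⟩, by rw [fdepth_eq_zero hfixz, h1]⟩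
      · have hnz : T.par z ≠ z := hnr z hz hne
        have hd := fdepth_succ (nonempty_fixSet hT' hz) hnz
        have hpk : fdepth T (T.par z) = k - 1 := by omega
        have hpn : T.par z ∈ T.nodes := P1 z hz
        obtain ⟨hfp, hdp⟩ := ih (k - 1) (by omega) (T.par z) hpn hc hpk
        have hpz : T'.par z = T.par z := hparn z hne hc
        have hfx : (fixSet T' z).Nonempty := by
          obtain ⟨n, hn⟩ := hfp
          exact ⟨n + 1, fixSet_succ.mpr (by rwa [hpz])⟩
        refine ⟨hfx, ?_⟩
        rw [fdepth_succ hfx (by rw [hpz]; exact hnz), hpz]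
        omega
  refine ⟨T', i, ?_, by rw [hT'def], ?_⟩
  · -- T' is a Lions forest
    have hhyper : hyper T' = (T.blocks ∪ {T.h0 \ {r₀}}) \ {(∅ : Set ℕ)} := by
      rw [hyper, hbl', hh0']
    refine ⟨?_, ?_, ?_, ?_, ?_, ?_, ⟨?_, ?_, ?_⟩, ?_, ?_, ?_⟩
    · -- closure
      intro z hz
      obtain ⟨hzn, hzne⟩ := (hmem z).mp hz
      by_cases hc : T.par z = r₀
      · rw [hparc z hzne hc]; exact hz
      · rw [hparn z hzne hc]
        exact (hmem _).mpr ⟨P1 z hzn, hc⟩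
    · -- normalisation
      intro z hz
      rw [hmem z] at hz
      push_neg at hz
      by_cases hzr : z = r₀
      · rw [hzr]; exact hparr₀
      · have hzn : z ∉ T.nodes := fun hm => hzr (hz hm)
        rw [hparn z hzr (fun hc => (hzr (by rw [← P2 z hzn]; exact hc)))]
        exact P2 z hzn
    · -- termination
      intro z hz
      obtain ⟨hzn, hzne⟩ := (hmem z).mp hz
      exact (hdepth z hzn hzne).1
    · -- labels off nodes
      intro z hz
      rw [hmem z] at hz
      push_neg at hz
      by_cases hzr : z = r₀
      · rw [hzr]; exact hlabr₀
      · rw [hlab z hzr]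
        exact P4 z (fun hc => hzr (hz hc))
    · -- labels on nodes
      intro z hz
      obtain ⟨hzn, hzne⟩ := (hmem z).mp hz
      rw [hlab z hzne]
      exact P5 z hzn
    · -- h0 ⊆ nodes
      rw [hh0']
      rintro z ⟨hzh, hzne⟩
      have : z ∈ T'.nodes := (hmem z).mpr ⟨P6 hzh, by simpa using hzne⟩
      simpa using this
    · -- ∅ ∉ blocks
      rw [hbl']; exact Q1
    · -- blocks ⊆ nodes \ h0
      rw [hbl', hh0']
      intro p hp z hz
      have h1 := Q2 p hp hz
      have hzr : z ≠ r₀ := fun hc => h1.2 (hc ▸ hr₀)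
      constructor
      · have : z ∈ T'.nodes := (hmem z).mpr ⟨h1.1, hzr⟩
        simpa using this
      · rintro ⟨hzh, _⟩
        exact h1.2 hzh
    · -- existence and uniqueness
      rintro z ⟨hzn, hzh⟩
      have hzn' : z ∈ T'.nodes := hzn
      obtain ⟨hzm, hzne⟩ := (hmem z).mp hzn'
      rw [hh0'] at hzh
      have hzh' : z ∉ T.h0 := fun hc => hzh ⟨hc, by simpa using hzne⟩
      obtain ⟨b, ⟨hb, hzb⟩, hbu⟩ := Q3 z ⟨by simpa using hzm, hzh'⟩
      rw [hbl']
      exact ⟨b, ⟨hb, hzb⟩, fun q hq => hbu q hq⟩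
    · -- 2.1
      rw [hh0']
      rintro ⟨y, hy, hyne⟩
      rw [Set.mem_singleton_iff] at hyne
      obtain ⟨z, hz, hzne, hzpar⟩ := lemG hT' (h0_mem_hyper ⟨r₀, hr₀⟩) hr₀ hr₀fix y hy hyne
        (hall y (P6 hy))
      exact ⟨z, ⟨hz, by simpa using hzne⟩, hparc z hzne hzpar⟩
    · -- 2.2
      rw [hhyper]
      rintro h ⟨hcase | hcase, hhne⟩ x hx y hy hdlt
      · -- a block
        have hxs := Q2 h hcase hx
        have hys := Q2 h hcase hy
        have hxr : x ≠ r₀ := fun hc => hxs.2 (hc ▸ hr₀)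
        have hyr : y ≠ r₀ := fun hc => hys.2 (hc ▸ hr₀)
        have hdx := (hdepth x hxs.1 hxr).2
        have hdy := (hdepth y hys.1 hyr).2
        have hdlt' : fdepth T x < fdepth T y := by omega
        have hpy := P9 h (block_mem_hyper hT' hcase) x hx y hy hdlt'
        have hpyr : T.par y ≠ r₀ := fun hc => (Q2 h hcase hpy).2 (hc ▸ hr₀)
        rw [hparn y hyr hpyr]
        exact hpy
      · -- the reduced tagged hyperedge
        rw [Set.mem_singleton_iff] at hcase
        subst hcase
        obtain ⟨hxh, hxne⟩ := hx
        obtain ⟨hyh, hyne⟩ := hy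
        rw [Set.mem_singleton_iff] at hxne hyne
        have hxn := P6 hxh
        have hyn := P6 hyh
        have hdx := (hdepth x hxn hxne).2
        have hdy := (hdepth y hyn hyne).2
        have hdyT : 2 ≤ fdepth T y := by
          have := hdpos x hxn hxne
          omega
        have hpy : T.par y ∈ T.h0 :=
          P9 T.h0 (h0_mem_hyper ⟨x, hxh⟩) x hxh y hyh (by omega)
        have hpyr : T.par y ≠ r₀ := by
          intro hc
          have := (hdep1 y hyn hyne).mp hc
          omega
        rw [hparn y hyne hpyr]
        exact ⟨hpy, by simpa using hpyr⟩
    · -- 2.3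
      rw [hhyper]
      rintro h ⟨hcase | hcase, hhne⟩ x hx y hy hnx hny hdeq hpne
      · -- a block
        have hxs := Q2 h hcase hx
        have hys := Q2 h hcase hy
        have hxr : x ≠ r₀ := fun hc => hxs.2 (hc ▸ hr₀)
        have hyr : y ≠ r₀ := fun hc => hys.2 (hc ▸ hr₀)
        have hpxr : T.par x ≠ r₀ := fun hc => hnx (hparc x hxr hc)
        have hpyr : T.par y ≠ r₀ := fun hc => hny (hparc y hyr hc)
        have hex : T'.par x = T.par x := hparn x hxr hpxr
        have hey : T'.par y = T.par y := hparn y hyr hpyr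
        rw [hex] at hnx hpne ⊢
        rw [hey] at hny hpne ⊢
        have hdx := (hdepth x hxs.1 hxr).2
        have hdy := (hdepth y hys.1 hyr).2
        exact P10 h (block_mem_hyper hT' hcase) x hx y hy
          (hnr x hxs.1 hxr) (hnr y hys.1 hyr) (by omega) hpne
      · rw [Set.mem_singleton_iff] at hcase
        subst hcase
        obtain ⟨hxh, hxne⟩ := hx
        obtain ⟨hyh, hyne⟩ := hy
        rw [Set.mem_singleton_iff] at hxne hyne
        have hxn := P6 hxh
        have hyn := P6 hyh
        have hpxr : T.par x ≠ r₀ := fun hc => hnx (hparc x hxne hc)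
        have hpyr : T.par y ≠ r₀ := fun hc => hny (hparc y hyne hc)
        have hex : T'.par x = T.par x := hparn x hxne hpxr
        have hey : T'.par y = T.par y := hparn y hyne hpyr
        rw [hex] at hnx hpne ⊢
        rw [hey] at hny hpne ⊢
        have hdx := (hdepth x hxn hxne).2
        have hdy := (hdepth y hyn hyne).2
        obtain ⟨c1, c2⟩ := P10 T.h0 (h0_mem_hyper ⟨x, hxh⟩) x hxh y hyh
          (hnr x hxn hxne) (hnr y hyn hyne) (by omega) hpne
        exact ⟨⟨c1, by simpa using hpxr⟩, ⟨c2, by simpa using hpyr⟩⟩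
  · -- T = froot T' i r₀
    refine LForest.ext' ?_ ?_ ?_ ?_ ?_
    · show T.nodes = insert r₀ T'.nodes
      rw [hT'def]
      exact (Finset.insert_erase hr₀n).symm
    · funext z
      show T.par z = if z ∈ T'.nodes ∧ T'.par z = z then r₀ else T'.par z
      by_cases hzr : z = r₀
      · subst hzr
        have : z ∉ T'.nodes := fun hc => ((hmem z).mp hc).2 rfl
        rw [if_neg (fun hc : _ ∧ _ => this hc.1), hparr₀]
        exact hr₀fix
      · by_cases hzn : z ∈ T.nodes
        · by_cases hc : T.par z = r₀
          · rw [if_pos ⟨(hmem z).mpr ⟨hzn, hzr⟩, hparc z hzr hc⟩]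
            exact hc
          · have h1 : T'.par z = T.par z := hparn z hzr hc
            rw [if_neg, h1]
            rintro ⟨_, hfix⟩
            rw [h1] at hfix
            exact hnr z hzn hzr hfix
        · have hzn' : z ∉ T'.nodes := fun hc => hzn ((hmem z).mp hc).1
          have hpz : T.par z = z := P2 z hzn
          rw [if_neg (fun hc : _ ∧ _ => hzn' hc.1),
            hparn z hzr (fun hc => hzr (hpz ▸ hc)), hpz]
    · show T.h0 = T'.h0 ∪ {r₀}
      rw [hh0']
      ext z
      simp only [Set.mem_union, Set.mem_diff, Set.mem_singleton_iff]
      constructor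
      · intro hz
        by_cases hzr : z = r₀
        · exact Or.inr hzr
        · exact Or.inl ⟨hz, hzr⟩
      · rintro (⟨hz, _⟩ | hz)
        · exact hz
        · exact hz ▸ hr₀
    · show T.blocks = T'.blocks
      rw [hbl']
    · funext z
      show T.lab z = Function.update T'.lab r₀ (some i) z
      by_cases hzr : z = r₀
      · subst hzr
        rw [Function.update_self]
        exact hi
      · rw [Function.update_of_ne hzr, hlab z hzr]

end ForwardUnroot

/-- Forward direction, by strong induction on twice the number of nodes plus an
indicator of the tagged hyperedge being empty. -/
lemma lions_gen {d : ℕ} : ∀ (N : ℕ) (T : LForest d),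
    2 * T.nodes.card + (if T.h0 = ∅ then 1 else 0) ≤ N → IsLionsForest T → Gen d T := by
  intro N
  induction N with
  | zero =>
    intro T hle hT
    exfalso
    by_cases hh0 : T.h0 = ∅
    · rw [if_pos hh0] at hle
      omega
    · rw [if_neg hh0] at hle
      have hcard : T.nodes.card = 0 := by omega
      have hnodes : T.nodes = ∅ := Finset.card_eq_zero.mp hcard
      apply hh0
      have := hT.2.2.2.2.2.1
      rw [hnodes] at this
      simpa using this
  | succ N ih =>
    intro T hle hT
    by_cases hnodes : T.nodes = ∅
    · rw [forest_eq_one hT hnodes]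
      exact Gen.one
    · have hne : T.nodes.Nonempty := Finset.nonempty_iff_ne_empty.mpr hnodes
      by_cases hh0 : T.h0 = ∅
      · -- un-decouple
        obtain ⟨T', hT', hnodes', hh0', heq⟩ := exists_undec hT hne hh0
        rw [heq]
        apply Gen.dec
        apply ih T' _ hT'
        rw [if_pos hh0] at hle
        rw [if_neg hh0', hnodes']
        omega
      · -- tagged hyperedge nonempty
        obtain ⟨r₀, hr₀, hr₀fix⟩ :=
          hT.2.2.2.2.2.2.2.1 (Set.nonempty_iff_ne_empty.mpr hh0)
        have hr₀n : r₀ ∈ T.nodes := hT.2.2.2.2.2.1 hr₀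
        have hpos : 0 < T.nodes.card := Finset.card_pos.mpr hne
        by_cases hsplit : ∃ x ∈ T.nodes, rt T x ≠ r₀
        · -- split
          obtain ⟨T₁, T₂, h1, h2, hdisj, heq, hne1, hne2, hunion⟩ :=
            exists_split hT hr₀ hr₀fix hsplit
          have hcards : T₁.nodes.card + T₂.nodes.card = T.nodes.card := by
            rw [← Finset.card_union_of_disjoint hdisj, hunion]
          have hc1 : 0 < T₁.nodes.card := Finset.card_pos.mpr hne1
          have hc2 : 0 < T₂.nodes.card := Finset.card_pos.mpr hne2
          rw [heq]
          refine Gen.prod (ih T₁ ?_ h1) (ih T₂ ?_ h2) hdisj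
          · have : (if T₁.h0 = ∅ then 1 else 0) ≤ 1 := by split <;> omega
            omega
          · have : (if T₂.h0 = ∅ then 1 else 0) ≤ 1 := by split <;> omega
            omega
        · -- un-root
          push_neg at hsplit
          obtain ⟨T', i, hT', hnodes', heq⟩ := exists_unroot hT hr₀ hr₀fix hsplit
          have hr₀' : r₀ ∉ T'.nodes := by
            rw [hnodes']
            exact Finset.notMem_erase r₀ T.nodes
          rw [heq]
          apply Gen.root i r₀ _ hr₀'
          apply ih T' _ hT'
          have hcard' : T'.nodes.card = T.nodes.card - 1 := by
            rw [hnodes']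
            exact Finset.card_erase_of_mem hr₀n
          have : (if T'.h0 = ∅ then 1 else 0) ≤ 1 := by split <;> omega
          omega

/-- The completion of `{𝟏}` with respect to the operations `⊛`, `ℰ` and
`⌊·⌋ᵢ`, `i ∈ {1,…,d}`, is the complete set of labelled Lions forests. -/
theorem stmt17 (d : ℕ) (T : LForest d) : IsLionsForest T ↔ Gen d T := by
  exact ⟨fun h => lions_gen (2 * T.nodes.card + (if T.h0 = ∅ then 1 else 0)) T le_rfl h,
    gen_isLionsForest⟩
end
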